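/- arXiv:1409.8093 — 6 statements merged into one kernel-verified Lean document; each statement's English description precedes it below -/
import Mathlib

section
/- The number of cycles statistic cyc over the symmetric group S_n has generating function: the sum over all permutations σ in S_n of t^{cyc(σ)} equals the product over i from 1 to n of (t + i - 1). -/
open Equiv Equiv.Perm

section Aux

variable {α : Type*} [Fintype α] [DecidableEq α]

/-- Splicing a fixed point into a cycle yields a cycle: auxiliary reachability. -/
private lemma sameCycle_splice {c : Perm α} {x y : α}
    (hy : y ∈ c.support) (hx : x ∉ c.support) :
    ∀ j : ℕ, (swap x y * c).SameCycle x ((c ^ j) y) := by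
  have hxy : x ≠ y := fun h => hx (h ▸ hy)
  have hcx : c x = x := notMem_support.mp hx
  have hstep : (swap x y * c) x = y := by simp [mul_apply, hcx]
  have hbase : (swap x y * c).SameCycle x y := ⟨1, by simpa using hstep⟩
  intro j
  induction j with
  | zero => simpa using hbase
  | succ j ih =>
    have hw : (c ^ j) y ∈ c.support := by
      rw [pow_apply_mem_support]; exact hy
    by_cases h : c ((c ^ j) y) = y
    · have : (c ^ (j + 1)) y = y := by rw [pow_succ', mul_apply, h]
      rw [this]; exact hbase
    · have hcw : c ((c ^ j) y) ∈ c.support := by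
        rw [apply_mem_support]; exact hw
      have hcwx : c ((c ^ j) y) ≠ x := fun hh => hx (hh ▸ hcw)
      have hone : (swap x y * c).SameCycle ((c ^ j) y) ((c ^ (j + 1)) y) := by
        refine ⟨1, ?_⟩
        have : (swap x y * c) ((c ^ j) y) = c ((c ^ j) y) := by
          rw [mul_apply, swap_apply_of_ne_of_ne hcwx h]
        rw [zpow_one, this, pow_succ', mul_apply]
      exact ih.trans hone

private lemma isCycle_swap_mul_of_not_mem {c : Perm α} {x y : α} (hc : c.IsCycle)
    (hy : y ∈ c.support) (hx : x ∉ c.support) : (swap x y * c).IsCycle := by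
  have hxy : x ≠ y := fun h => hx (h ▸ hy)
  have hcx : c x = x := notMem_support.mp hx
  refine ⟨x, ?_, fun z hz => ?_⟩
  · simp [mul_apply, hcx, Ne.symm hxy]
  · by_cases hzx : z = x
    · subst hzx; exact ⟨0, by simp⟩
    by_cases hzs : z ∈ c.support
    · obtain ⟨j, hj⟩ := hc.exists_pow_eq (mem_support.mp hy) (mem_support.mp hzs)
      exact hj ▸ sameCycle_splice hy hx j
    · exfalso
      apply hz
      have hcz : c z = z := notMem_support.mp hzs
      have hzy : z ≠ y := fun h => hzs (h ▸ hy)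
      rw [mul_apply, hcz, swap_apply_of_ne_of_ne hzx hzy]

/-- Multiplying by a transposition that splices the fixed point `x` into the cycle of `y`
preserves the number of nontrivial cycles. -/
private lemma card_cycleType_swap_mul {f : Perm α} {x y : α}
    (hx : f x = x) (hxy : x ≠ y) (hy : f y ≠ y) :
    Multiset.card (swap x y * f).cycleType = Multiset.card f.cycleType := by
  set c := f.cycleOf y with hcdef
  have hyc : y ∈ c.support := by
    rw [hcdef, mem_support_cycleOf_iff]
    exact ⟨SameCycle.refl _ _, mem_support.mpr hy⟩
  have hcyc : c.IsCycle := isCycle_cycleOf f hy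
  have hcmem : c ∈ f.cycleFactorsFinset := cycleOf_mem_cycleFactorsFinset_iff.mpr (mem_support.mpr hy)
  have hd : (f * c⁻¹).Disjoint c := disjoint_mul_inv_of_mem_cycleFactorsFinset hcmem
  set h := f * c⁻¹ with hhdef
  have hhc : h * c = f := by rw [hhdef, inv_mul_cancel_right]
  have hsupph : h.support ≤ f.support := by
    calc h.support ≤ f.support ⊔ c⁻¹.support := support_mul_le f c⁻¹
    _ ≤ f.support := by
        rw [support_inv]
        exact sup_le le_rfl (support_cycleOf_le f y)
  have hxsupp : x ∉ f.support := notMem_support.mpr hx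
  have hxc : x ∉ c.support := fun hh => hxsupp (support_cycleOf_le f y hh)
  have hhy : h y = y := by
    rcases hd y with h1 | h2
    · exact h1
    · exact absurd h2 (mem_support.mp hyc)
  have hhx : h x = x := notMem_support.mp (fun hh => hxsupp (hsupph hh))
  have hdsw : (swap x y).Disjoint h := by
    intro z
    by_cases hzx : z = x
    · subst hzx; exact Or.inr hhx
    by_cases hzy : z = y
    · subst hzy; exact Or.inr hhy
    · exact Or.inl (swap_apply_of_ne_of_ne hzx hzy)
  have key : swap x y * f = h * (swap x y * c) := by
    rw [← hhc, ← mul_assoc, hdsw.commute.eq, mul_assoc]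
  have hc' : (swap x y * c).IsCycle := isCycle_swap_mul_of_not_mem hcyc hyc hxc
  have hd' : h.Disjoint (swap x y * c) := by
    intro z
    by_cases hz : h z = z
    · exact Or.inl hz
    · have hcz : c z = z := (hd z).resolve_left hz
      have hzx : z ≠ x := fun hh => hz (hh ▸ hhx)
      have hzy : z ≠ y := fun hh => hz (hh ▸ hhy)
      exact Or.inr (by rw [mul_apply, hcz, swap_apply_of_ne_of_ne hzx hzy])
  have hf : f.cycleType = h.cycleType + c.cycleType := by rw [← hhc, hd.cycleType_mul]
  rw [key, hd'.cycleType_mul, hc'.cycleType, hf, hcyc.cycleType]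
  simp

/-- The fixed-point set after multiplying by a transposition moving a fixed point. -/
private lemma fixed_swap_mul {f : Perm α} {x y : α} (hx : f x = x) (hxy : x ≠ y) :
    {z | (swap x y * f) z = z} = {z | f z = z} \ {x, y} := by
  ext z
  simp only [Set.mem_setOf_eq, Set.mem_diff, Set.mem_insert_iff, Set.mem_singleton_iff,
    mul_apply]
  have swz : swap x y (f z) = z ↔ f z = swap x y z := by
    constructor
    · intro h
      have := congrArg (swap x y) h
      rwa [swap_apply_self] at this
    · intro h
      rw [h, swap_apply_self]
  rw [swz]
  constructor
  · intro h
    rcases eq_or_ne z x with rfl | hzx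
    · rw [hx, swap_apply_left] at h
      exact absurd h hxy
    rcases eq_or_ne z y with rfl | hzy
    · rw [swap_apply_right] at h
      exact absurd (f.injective (h.trans hx.symm)).symm hxy
    · rw [swap_apply_of_ne_of_ne hzx hzy] at h
      exact ⟨h, by tauto⟩
  · rintro ⟨h1, h2⟩
    push_neg at h2
    rw [swap_apply_of_ne_of_ne h2.1 h2.2]
    exact h1

private lemma cycStat_aux_swap_mul {f : Perm α} {x y : α} (hx : f x = x) (hxy : x ≠ y) :
    Multiset.card (swap x y * f).cycleType + {z | (swap x y * f) z = z}.ncard + 1 =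
      Multiset.card f.cycleType + {z | f z = z}.ncard := by
  have hfix := fixed_swap_mul hx hxy
  by_cases hy : f y = y
  · -- swap is disjoint from f
    have hdsw : (swap x y).Disjoint f := by
      intro z
      by_cases hzx : z = x
      · subst hzx; exact Or.inr hx
      by_cases hzy : z = y
      · subst hzy; exact Or.inr hy
      · exact Or.inl (swap_apply_of_ne_of_ne hzx hzy)
    have hct : (swap x y * f).cycleType = (swap x y).cycleType + f.cycleType := hdsw.cycleType_mul
    have hsw : Multiset.card (swap x y).cycleType = 1 :=
      card_cycleType_eq_one.mpr (isCycle_swap hxy)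
    have hfixf : {z | f z = z} = insert x (insert y ({z | f z = z} \ {x, y})) := by
      ext z
      simp only [Set.mem_setOf_eq, Set.mem_insert_iff, Set.mem_diff, Set.mem_singleton_iff]
      constructor
      · intro h
        by_cases hzx : z = x
        · exact Or.inl hzx
        by_cases hzy : z = y
        · exact Or.inr (Or.inl hzy)
        · exact Or.inr (Or.inr ⟨h, by tauto⟩)
      · rintro (rfl | rfl | ⟨h, _⟩) <;> assumption
    have hn1 : y ∉ {z | f z = z} \ ({x, y} : Set α) := by simp
    have hn2 : x ∉ insert y ({z | f z = z} \ ({x, y} : Set α)) := by simp [hxy]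
    have hcard : {z | f z = z}.ncard = ({z | f z = z} \ {x, y}).ncard + 2 := by
      nth_rewrite 1 [hfixf]
      rw [Set.ncard_insert_of_notMem hn2, Set.ncard_insert_of_notMem hn1]
    rw [hfix, hct, hcard, Multiset.card_add, hsw]
    omega
  · have hct := card_cycleType_swap_mul hx hxy hy
    have hfixf : {z | f z = z} = insert x ({z | f z = z} \ {x, y}) := by
      ext z
      simp only [Set.mem_setOf_eq, Set.mem_insert_iff, Set.mem_diff, Set.mem_singleton_iff]
      constructor
      · intro h
        by_cases hzx : z = x
        · exact Or.inl hzx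
        · have hzy : z ≠ y := fun hh => hy (hh ▸ h)
          exact Or.inr ⟨h, by tauto⟩
      · rintro (rfl | ⟨h, _⟩) <;> assumption
    have hn2 : x ∉ {z | f z = z} \ ({x, y} : Set α) := by simp
    have hcard : {z | f z = z}.ncard = ({z | f z = z} \ {x, y}).ncard + 1 := by
      nth_rewrite 1 [hfixf]
      rw [Set.ncard_insert_of_notMem hn2]
    rw [hfix, hct, hcard]
    omega

end Aux

/-- The equivalence between `Fin n` and nonzero elements of `Fin (n + 1)`. -/
private def finSuccEquivNe (n : ℕ) : Fin n ≃ {x : Fin (n + 1) // x ≠ 0} where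
  toFun x := ⟨x.succ, x.succ_ne_zero⟩
  invFun x := (x : Fin (n + 1)).pred x.2
  left_inv x := by simp
  right_inv x := by simp

private lemma decomposeFin_symm_zero_eq {n : ℕ} (e : Perm (Fin n)) :
    Equiv.Perm.decomposeFin.symm (0, e) = e.extendDomain (finSuccEquivNe n) := by
  ext z
  refine Fin.cases ?_ (fun i => ?_) z
  · rw [Equiv.Perm.decomposeFin_symm_apply_zero,
      Perm.extendDomain_apply_not_subtype _ _ (by simp)]
  · rw [Equiv.Perm.decomposeFin_symm_apply_succ, Equiv.swap_self, Equiv.refl_apply]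
    have h1 : (i.succ : Fin (n + 1)) = ((finSuccEquivNe n) i : Fin (n + 1)) := rfl
    rw [h1, Perm.extendDomain_apply_image]
    rfl

private lemma decomposeFin_symm_eq_swap_mul {n : ℕ} (p : Fin (n + 1)) (e : Perm (Fin n)) :
    Equiv.Perm.decomposeFin.symm (p, e) =
      Equiv.swap 0 p * Equiv.Perm.decomposeFin.symm (0, e) := by
  ext z
  refine Fin.cases ?_ (fun i => ?_) z
  · rw [Equiv.Perm.decomposeFin_symm_apply_zero, Perm.mul_apply,
      Equiv.Perm.decomposeFin_symm_apply_zero, Equiv.swap_apply_left]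
  · rw [Equiv.Perm.decomposeFin_symm_apply_succ, Perm.mul_apply,
      Equiv.Perm.decomposeFin_symm_apply_succ, Equiv.swap_self, Equiv.refl_apply]

/-- The number of cycles of `σ ∈ S_n`, including fixed points. -/
noncomputable def cycStat {n : ℕ} (σ : Equiv.Perm (Fin n)) : ℕ :=
  σ.cycleType.card + {x | σ x = x}.ncard

private lemma cycStat_decomposeFin {n : ℕ} (p : Fin (n + 1)) (e : Perm (Fin n)) :
    cycStat (Equiv.Perm.decomposeFin.symm (p, e)) =
      cycStat e + if p = 0 then 1 else 0 := by
  set E := Equiv.Perm.decomposeFin.symm (0, e) with hEdef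
  have hE0 : E 0 = 0 := Equiv.Perm.decomposeFin_symm_apply_zero 0 e
  have hcE : E.cycleType = e.cycleType := by
    rw [hEdef, decomposeFin_symm_zero_eq, Equiv.Perm.cycleType_extendDomain]
  have hfE : {z | E z = z} = insert 0 (Fin.succ '' {x | e x = x}) := by
    ext z
    refine Fin.cases ?_ (fun i => ?_) z
    · simp [hE0]
    · have hEsucc : E i.succ = (e i).succ := by
        rw [hEdef, Equiv.Perm.decomposeFin_symm_apply_succ, Equiv.swap_self, Equiv.refl_apply]
      simp only [Set.mem_setOf_eq, Set.mem_insert_iff, Set.mem_image, hEsucc]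
      constructor
      · intro h
        exact Or.inr ⟨i, Fin.succ_injective n h, rfl⟩
      · rintro (h | ⟨x, hx, hxi⟩)
        · exact absurd h (Fin.succ_ne_zero i)
        · rw [← Fin.succ_injective n hxi, hx]
  have hfEcard : {z | E z = z}.ncard = {x | e x = x}.ncard + 1 := by
    rw [hfE, Set.ncard_insert_of_notMem (by simp [Fin.succ_ne_zero]),
      Set.ncard_image_of_injective _ (Fin.succ_injective n)]
  rcases eq_or_ne p 0 with rfl | hp
  · rw [if_pos rfl, ← hEdef]
    unfold cycStat
    rw [hcE, hfEcard]
    omega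
  · rw [if_neg hp, decomposeFin_symm_eq_swap_mul, ← hEdef]
    have := cycStat_aux_swap_mul (f := E) (x := 0) (y := p) hE0 (Ne.symm hp)
    unfold cycStat
    rw [hcE, hfEcard] at this
    omega

/-- The distribution of `cyc` over `S_n` is `∏_{i=1}^n (t + i - 1)`. -/
theorem cyc_generating_function (n : ℕ) (R : Type*) [CommRing R] (t : R) :
    ∑ σ : Equiv.Perm (Fin n), t ^ cycStat σ =
      ∏ i ∈ Finset.range n, (t + (i : R)) := by
  induction n with
  | zero =>
    rw [Finset.prod_range_zero]
    have h1 : ∀ σ : Perm (Fin 0), cycStat σ = 0 := by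
      intro σ
      have hσ : σ = 1 := Subsingleton.elim _ _
      subst hσ
      unfold cycStat
      simp [Set.eq_empty_of_isEmpty ({x : Fin 0 | (1 : Perm (Fin 0)) x = x}), Set.ncard_univ]
    simp [h1]
  | succ n ih =>
    rw [← Equiv.sum_comp (Equiv.Perm.decomposeFin (n := n)).symm
      (fun σ => t ^ cycStat σ), Fintype.sum_prod_type]
    simp only [cycStat_decomposeFin]
    rw [Fin.sum_univ_succ]
    have h0 : ∀ e : Perm (Fin n),
        cycStat e + (if (0 : Fin (n + 1)) = 0 then 1 else 0) = cycStat e + 1 := by simp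
    have hs : ∀ (i : Fin n) (e : Perm (Fin n)),
        cycStat e + (if (Fin.succ i : Fin (n + 1)) = 0 then 1 else 0) = cycStat e := by
      simp [Fin.succ_ne_zero]
    simp only [h0, hs, if_true]
    rw [Finset.prod_range_succ, ← ih]
    have h2 : ∑ e : Perm (Fin n), t ^ (cycStat e + 1) =
        (∑ e : Perm (Fin n), t ^ cycStat e) * t := by
      rw [Finset.sum_mul]
      simp [pow_succ]
    rw [h2, Finset.sum_const, Finset.card_univ, Fintype.card_fin, nsmul_eq_mul]
    ring
end

section
/- Every permutation σ ∈ S_n has a unique factorization σ = (i_1 j_1)(i_2 j_2)⋯(i_k j_k) as a product of transpositions with j_1 < j_2 < ⋯ < j_k and i_s < j_s for each s. -/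
lemma prod_swap_fix {n : ℕ} (l : List (Fin n × Fin n)) (j : Fin n)
    (h : ∀ p ∈ l, p.1 < j ∧ p.2 < j) :
    ∀ x : Fin n, j ≤ x → (l.map fun p => Equiv.swap p.1 p.2).prod x = x := by
  induction l with
  | nil => simp
  | cons a t ih =>
    intro x hx
    simp only [List.map_cons, List.prod_cons, Equiv.Perm.mul_apply]
    rw [ih (fun p hp => h p (List.mem_cons_of_mem _ hp)) x hx]
    have h1 := h a (List.mem_cons_self)
    exact Equiv.swap_apply_of_ne_of_ne (lt_of_lt_of_le h1.1 hx).ne' (lt_of_lt_of_le h1.2 hx).ne'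

lemma perm_lt_of_fix {n : ℕ} (e : Equiv.Perm (Fin n)) (j : Fin n)
    (h : ∀ x : Fin n, j ≤ x → e x = x) {y : Fin n} (hy : y < j) : e y < j := by
  by_contra hc
  push_neg at hc
  have h2 : e y = y := e.injective (h (e y) hc)
  exact absurd (h2 ▸ hc) (not_le.mpr hy)

lemma last_facts {n : ℕ} (l : List (Fin n × Fin n)) (p : Fin n × Fin n)
    (hlt : ∀ q ∈ l ++ [p], q.1 < q.2)
    (hs : ((l ++ [p]).map Prod.snd).Pairwise (· < ·)) :
    (∀ q ∈ l, q.2 < p.2) ∧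
    ((l ++ [p]).map (fun q => Equiv.swap q.1 q.2)).prod p.2 < p.2 ∧
    (∀ x : Fin n, p.2 < x → ((l ++ [p]).map (fun q => Equiv.swap q.1 q.2)).prod x = x) := by
  rw [List.map_append] at hs
  have hpa := (List.pairwise_append.mp hs).2.2
  have hsnd : ∀ q ∈ l, q.2 < p.2 := fun q hq =>
    hpa q.2 (List.mem_map_of_mem hq) p.2 (List.mem_singleton_self _)
  have hboth : ∀ q ∈ l, q.1 < p.2 ∧ q.2 < p.2 := fun q hq =>
    ⟨lt_trans (hlt q (List.mem_append_left _ hq)) (hsnd q hq), hsnd q hq⟩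
  have hP := prod_swap_fix l p.2 hboth
  have hdec : ((l ++ [p]).map (fun q => Equiv.swap q.1 q.2)).prod
      = (l.map fun q => Equiv.swap q.1 q.2).prod * Equiv.swap p.1 p.2 := by
    rw [List.map_append, List.prod_append]; simp
  have hp12 : p.1 < p.2 := hlt p (List.mem_append_right _ (List.mem_singleton_self _))
  refine ⟨hsnd, ?_, ?_⟩
  · rw [hdec, Equiv.Perm.mul_apply, Equiv.swap_apply_right]
    exact perm_lt_of_fix _ p.2 hP hp12
  · intro x hx
    rw [hdec, Equiv.Perm.mul_apply,
      Equiv.swap_apply_of_ne_of_ne (lt_trans hp12 hx).ne' hx.ne']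
    exact hP x hx.le

lemma snd_bound {n : ℕ} (l : List (Fin n × Fin n)) (m : ℕ)
    (hlt : ∀ q ∈ l, q.1 < q.2)
    (hs : (l.map Prod.snd).Pairwise (· < ·))
    (hfix : ∀ x : Fin n, m ≤ x.val → (l.map fun q => Equiv.swap q.1 q.2).prod x = x) :
    ∀ q ∈ l, (q.2 : ℕ) < m := by
  rcases List.eq_nil_or_concat l with rfl | ⟨L, p, rfl⟩
  · simp
  · simp only [List.concat_eq_append] at hlt hs hfix ⊢
    have hf := last_facts L p hlt hs
    have hp2 : (p.2 : ℕ) < m := by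
      by_contra hc
      push_neg at hc
      have h2 := hfix p.2 hc
      rw [h2] at hf
      exact absurd hf.2.1 (lt_irrefl _)
    intro q hq
    rcases List.mem_append.mp hq with hq | hq
    · exact lt_trans (Fin.lt_iff_val_lt_val.mp (hf.1 q hq)) hp2
    · rw [List.mem_singleton.mp hq]; exact hp2

lemma key {n : ℕ} : ∀ k : ℕ, ∀ σ : Equiv.Perm (Fin n),
    (∀ x : Fin n, k ≤ x.val → σ x = x) →
    ∃! l : List (Fin n × Fin n),
      (∀ p ∈ l, p.1 < p.2) ∧
      (l.map Prod.snd).Pairwise (· < ·) ∧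
      (l.map fun p => Equiv.swap p.1 p.2).prod = σ := by
  intro k
  induction k using Nat.strong_induction_on with
  | _ k ih =>
    intro σ hσ
    by_cases h1 : σ = 1
    · subst h1
      refine ⟨[], ⟨by simp, by simp, by simp⟩, ?_⟩
      rintro m ⟨hlt, hs, hprod⟩
      rcases List.eq_nil_or_concat m with rfl | ⟨L, p, rfl⟩
      · rfl
      · exfalso
        simp only [List.concat_eq_append] at hlt hs hprod
        have hf := (last_facts L p hlt hs).2.1
        rw [hprod] at hf
        simp at hf
    · have hne : σ.support.Nonempty := by
        rw [Finset.nonempty_iff_ne_empty]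
        simpa [Equiv.Perm.support_eq_empty_iff] using h1
      set j := σ.support.max' hne with hj
      have hjs : σ j ≠ j := Equiv.Perm.mem_support.mp (σ.support.max'_mem hne)
      have hmax : ∀ x : Fin n, j < x → σ x = x := by
        intro x hx
        by_contra hc
        exact absurd (Finset.le_max' _ x (Equiv.Perm.mem_support.mpr hc)) (not_le.mpr hx)
      have hjk : (j : ℕ) < k := by
        by_contra hc
        exact hjs (hσ j (le_of_not_gt hc))
      set i := σ⁻¹ j with hi
      have hii : σ i = j := Equiv.apply_symm_apply σ j
      have hij : i < j := by
        have hne2 : i ≠ j := by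
          intro h
          exact hjs (by rw [← h, hii, h])
        have : i ∈ σ.support := Equiv.Perm.mem_support.mpr (by rw [hii]; exact fun h => hne2 h.symm)
        exact lt_of_le_of_ne (Finset.le_max' _ _ this) hne2
      set τ := σ * Equiv.swap i j with hτdef
      have hτ : ∀ x : Fin n, (j : ℕ) ≤ x.val → τ x = x := by
        intro x hx
        rcases eq_or_lt_of_le (Fin.le_def.mpr hx : j ≤ x) with rfl | hlt
        · simp [hτdef, hii]
        · rw [hτdef, Equiv.Perm.mul_apply,
            Equiv.swap_apply_of_ne_of_ne (lt_trans hij hlt).ne' hlt.ne']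
          exact hmax x hlt
      obtain ⟨l', ⟨hl1, hl2, hl3⟩, huniq⟩ := ih (j : ℕ) hjk τ hτ
      have hsnd' : ∀ q ∈ l', (q.2 : ℕ) < (j : ℕ) :=
        snd_bound l' (j : ℕ) hl1 hl2 (by rw [hl3]; exact hτ)
      refine ⟨l' ++ [(i, j)], ⟨?_, ?_, ?_⟩, ?_⟩
      · intro p hp
        rcases List.mem_append.mp hp with hp | hp
        · exact hl1 p hp
        · rw [List.mem_singleton.mp hp]; exact hij
      · rw [List.map_append]
        refine List.pairwise_append.mpr ⟨hl2, List.pairwise_singleton _ _, ?_⟩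
        intro a ha b hb
        rw [List.mem_singleton.mp hb]
        obtain ⟨q, hq, rfl⟩ := List.mem_map.mp ha
        exact hsnd' q hq
      · rw [List.map_append, List.prod_append]
        simp [hl3, hτdef, mul_assoc]
      · rintro m ⟨hm1, hm2, hm3⟩
        rcases List.eq_nil_or_concat m with rfl | ⟨L, p, rfl⟩
        · exact absurd hm3.symm h1
        · simp only [List.concat_eq_append] at hm1 hm2 hm3 ⊢
          have hf := last_facts L p hm1 hm2
          rw [hm3] at hf
          have hp2j : p.2 = j := by
            have h4 : p.2 ≤ j := Finset.le_max' _ _ (Equiv.Perm.mem_support.mpr hf.2.1.ne)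
            rcases eq_or_lt_of_le h4 with h5 | h5
            · exact h5
            · exact absurd (hf.2.2 j h5 ▸ hjs) (by simp [hf.2.2 j h5])
          have hLpairs : ∀ q ∈ L, q.1 < j ∧ q.2 < j := by
            intro q hq
            have := hf.1 q hq
            rw [hp2j] at this
            exact ⟨lt_trans (hm1 q (List.mem_append_left _ hq)) this, this⟩
          have hLprod : (L.map fun q => Equiv.swap q.1 q.2).prod
              = σ * Equiv.swap p.1 p.2 := by
            have : (L.map fun q => Equiv.swap q.1 q.2).prod * Equiv.swap p.1 p.2 = σ := by
              rw [← hm3, List.map_append, List.prod_append]; simp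
            rw [← this, mul_assoc, Equiv.swap_mul_self, mul_one]
          have hp1i : p.1 = i := by
            have h6 : (L.map fun q => Equiv.swap q.1 q.2).prod j = j :=
              prod_swap_fix L j hLpairs j le_rfl
            rw [hLprod, Equiv.Perm.mul_apply, hp2j, Equiv.swap_apply_right] at h6
            rw [hi, ← h6, Equiv.Perm.inv_def, Equiv.symm_apply_apply]
          have hLτ : (L.map fun q => Equiv.swap q.1 q.2).prod = τ := by
            rw [hLprod, hp1i, hp2j, hτdef]
          have hLsort : (L.map Prod.snd).Pairwise (· < ·) := by
            rw [List.map_append] at hm2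
            exact (List.pairwise_append.mp hm2).1
          have hLm1 : ∀ q ∈ L, q.1 < q.2 := fun q hq => hm1 q (List.mem_append_left _ hq)
          have hLeq : L = l' := huniq L ⟨hLm1, hLsort, hLτ⟩
          rw [hLeq, show p = (i, j) from Prod.ext hp1i hp2j]

/-- Every `σ ∈ S_n` has a unique factorization `σ = (i_1 j_1)(i_2 j_2)⋯(i_k j_k)`
into transpositions with `j_1 < j_2 < ⋯ < j_k` and `i_s < j_s` for each `s`.
Each transposition `(i_s j_s)` is recorded as the pair `(i_s, j_s)`. -/
theorem unique_sorting_factorization (n : ℕ) (σ : Equiv.Perm (Fin n)) :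
    ∃! l : List (Fin n × Fin n),
      (∀ p ∈ l, p.1 < p.2) ∧
      (l.map Prod.snd).Pairwise (· < ·) ∧
      (l.map fun p => Equiv.swap p.1 p.2).prod = σ := by
  exact key n σ (fun x hx => absurd x.isLt (not_lt.mpr hx))
end

section
/- The pairs of statistics (inv, rmin) and (sor, cyc) are jointly equidistributed over S_n, and their common generating function is Σ_{σ∈S_n} q^{inv(σ)} t^{rmin(σ)} = Σ_{σ∈S_n} q^{sor(σ)} t^{cyc(σ)} = Π_{i=1}^n (t + [i]_q - 1). -/
open Equiv Equiv.Perm Finset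

private lemma ncard_setOf_eq {α : Type*} [Fintype α] (P : α → Prop) [DecidablePred P] :
    {x | P x}.ncard = (Finset.univ.filter P).card := by
  rw [← Set.ncard_coe_finset]
  congr 1
  ext x
  simp

private lemma card_filter_val_lt {n k : ℕ} (h : k ≤ n) :
    ((Finset.univ : Finset (Fin n)).filter fun j : Fin n => (j : ℕ) < k).card = k := by
  refine Finset.card_eq_of_bijective (fun i hi => (⟨i, lt_of_lt_of_le hi h⟩ : Fin n)) ?_ ?_ ?_
  · intro a ha
    simp only [mem_filter, mem_univ, true_and] at ha
    exact ⟨a.1, ha, by simp⟩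
  · intro i hi
    simp [hi]
  · intro i j hi hj hij
    simpa using congrArg Fin.val hij

/-- The number of inversions of `σ ∈ S_n`. -/
noncomputable def invStat {n : ℕ} (σ : Equiv.Perm (Fin n)) : ℕ :=
  {p : Fin n × Fin n | p.1 < p.2 ∧ σ p.2 < σ p.1}.ncard

/-- The number of right-to-left minima of `σ ∈ S_n` (positions `i` with
`σ i < σ j` for all `j > i`). -/
noncomputable def rminStat {n : ℕ} (σ : Equiv.Perm (Fin n)) : ℕ :=
  {i : Fin n | ∀ j, i < j → σ i < σ j}.ncard

private lemma invStat_eq_sum {k : ℕ} (σ : Perm (Fin k)) :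
    invStat σ = ∑ a : Fin k, ∑ b : Fin k, if a < b ∧ σ b < σ a then 1 else 0 := by
  rw [invStat, ncard_setOf_eq, Finset.card_filter, Fintype.sum_prod_type]

private lemma rminStat_eq_sum {k : ℕ} (σ : Perm (Fin k)) :
    rminStat σ = ∑ i : Fin k, if (∀ j, i < j → σ i < σ j) then 1 else 0 := by
  rw [rminStat, ncard_setOf_eq, Finset.card_filter]

/-- general-type version of `cycStat`. -/
private def cstat {α : Type*} [Fintype α] [DecidableEq α] (g : Perm α) : ℕ :=
  Multiset.card g.cycleType + (Finset.univ.filter fun x => g x = x).card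

private lemma cycStat_eq_cstat {n : ℕ} (σ : Perm (Fin n)) : cycStat σ = cstat σ := by
  rw [cycStat, cstat, ncard_setOf_eq]

section CycleLemma

variable {α : Type*} [Fintype α] [DecidableEq α]

private lemma isCycle_mul_swap {γ : Perm α} {p b : α}
    (hγ : γ.IsCycle) (hp : γ p ≠ p) (hb : γ b = b) :
    (γ * swap p b).IsCycle ∧ (γ * swap p b).support = insert b γ.support := by
  have hpb : p ≠ b := fun h => hp (by rw [h, hb])
  have hγpb : γ p ≠ b := fun h => hpb (γ.injective (h.trans hb.symm))
  have hab : ∀ x, x ≠ p → x ≠ b → (γ * swap p b) x = γ x := by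
    intro x h1 h2
    rw [mul_apply, swap_apply_of_ne_of_ne h1 h2]
  have hP : (γ * swap p b) p = b := by rw [mul_apply, swap_apply_left, hb]
  have hB : (γ * swap p b) b = γ p := by rw [mul_apply, swap_apply_right]
  have hpowb : ∀ k : ℕ, (γ ^ k) b = b := fun k =>
    Equiv.Perm.pow_apply_eq_self_of_apply_eq_self hb k
  have key : ∀ k : ℕ, (γ * swap p b).SameCycle b ((γ ^ k) p) := by
    intro k
    induction k with
    | zero =>
      refine SameCycle.symm ⟨1, ?_⟩
      simp [hP]
    | succ k ih =>
      by_cases hk : (γ ^ k) p = p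
      · refine ⟨1, ?_⟩
        simp only [zpow_one]
        rw [hB, pow_succ', mul_apply, hk]
      · have hkb : (γ ^ k) p ≠ b := fun h =>
          hpb ((γ ^ k).injective (h.trans (hpowb k).symm))
        refine ih.trans ⟨1, ?_⟩
        simp only [zpow_one]
        rw [hab _ hk hkb, pow_succ', mul_apply]
  have hsupp : (γ * swap p b).support = insert b γ.support := by
    ext x
    simp only [Equiv.Perm.mem_support, Finset.mem_insert]
    by_cases h1 : x = p
    · subst h1
      rw [hP]
      simp [Ne.symm hpb, hp]
    · by_cases h2 : x = b
      · subst h2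
        rw [hB]
        simp [hγpb]
      · rw [hab x h1 h2]
        simp [h2]
  refine ⟨⟨b, ?_, ?_⟩, hsupp⟩
  · rw [hB]; exact fun h => hγpb h
  · intro y hy
    by_cases h2 : y = b
    · subst h2; exact SameCycle.refl _ _
    · by_cases h1 : y = p
      · subst h1; simpa using key 0
      · have hyy : γ y ≠ y := by rw [← hab y h1 h2]; exact hy
        obtain ⟨i, _, hi⟩ := (hγ.sameCycle hp hyy).exists_pow_eq'
        rw [← hi]
        exact key i

private lemma cstat_mul_swap (g : Perm α) {p b : α}
    (hb : g b = b) (hpb : p ≠ b) : cstat (g * swap p b) + 1 = cstat g := by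
  classical
  have hgpb : g p ≠ b := fun h => hpb (g.injective (h.trans hb.symm))
  by_cases hgp : g p = p
  · -- disjoint case
    have hdisj : g.Disjoint (swap p b) := by
      rw [Equiv.Perm.disjoint_iff_eq_or_eq]
      intro x
      by_cases h1 : x = p
      · subst h1; exact Or.inl hgp
      · by_cases h2 : x = b
        · subst h2; exact Or.inl hb
        · exact Or.inr (swap_apply_of_ne_of_ne h1 h2)
    have hct : (g * swap p b).cycleType = g.cycleType + {2} := by
      rw [hdisj.cycleType_mul, (isCycle_swap hpb).cycleType, card_support_swap hpb]
    have hfix : (Finset.univ.filter fun x => (g * swap p b) x = x) =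
        (Finset.univ.filter fun x => g x = x) \ {p, b} := by
      ext x
      simp only [mem_filter, mem_univ, true_and, mem_sdiff, mem_insert, mem_singleton]
      by_cases h1 : x = p
      · subst h1
        rw [mul_apply, swap_apply_left, hb]
        simp [Ne.symm hpb, hgp]
      · by_cases h2 : x = b
        · subst h2
          rw [mul_apply, swap_apply_right]
          simp [hgp, h1, hb, hpb]
        · rw [mul_apply, swap_apply_of_ne_of_ne h1 h2]
          simp [h1, h2]
    have hsub : ({p, b} : Finset α) ⊆ Finset.univ.filter fun x => g x = x := by
      intro x hx
      simp only [mem_insert, mem_singleton] at hx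
      rcases hx with rfl | rfl <;> simp [hgp, hb]
    have hcard2 : ({p, b} : Finset α).card = 2 := Finset.card_pair hpb
    have hle := Finset.card_le_card hsub
    rw [cstat, cstat, hct, hfix, Finset.card_sdiff_of_subset hsub, hcard2, Multiset.card_add]
    simp only [Multiset.card_singleton]
    rw [hcard2] at hle
    omega
  · -- cycle-insertion case
    set γ := g.cycleOf p with hγdef
    have hγc : γ.IsCycle := isCycle_cycleOf g hgp
    have hγp : γ p = g p := cycleOf_apply_self g p
    have hγpp : γ p ≠ p := by rw [hγp]; exact hgp
    have hmem : γ ∈ g.cycleFactorsFinset :=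
      cycleOf_mem_cycleFactorsFinset_iff.mpr (Equiv.Perm.mem_support.mpr hgp)
    have hdisj : (g * γ⁻¹).Disjoint γ := disjoint_mul_inv_of_mem_cycleFactorsFinset hmem
    set δ := g * γ⁻¹ with hδdef
    have hg : δ * γ = g := by
      rw [hδdef, mul_assoc, inv_mul_cancel, mul_one]
    have hbg : b ∉ g.support := by simp [Equiv.Perm.mem_support, hb]
    have hbγs : b ∉ γ.support := fun h => hbg (support_cycleOf_le g p h)
    have hbγ : γ b = b := by
      by_contra h
      exact hbγs (Equiv.Perm.mem_support.mpr h)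
    have hsg : g.support = δ.support ∪ γ.support := by
      rw [← hg, hdisj.support_mul]
    have hbδ : δ b = b := by
      by_contra h
      exact hbg (hsg ▸ Finset.mem_union_left _ (Equiv.Perm.mem_support.mpr h))
    have hδp : δ p = p := by
      rcases (Equiv.Perm.disjoint_iff_eq_or_eq.mp hdisj) p with h | h
      · exact h
      · exact absurd h hγpp
    obtain ⟨hcyc', hsupp'⟩ := isCycle_mul_swap hγc hγpp hbγ
    have hdisj' : δ.Disjoint (γ * swap p b) := by
      rw [Equiv.Perm.disjoint_iff_eq_or_eq]
      intro x
      by_cases h1 : x = p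
      · subst h1; exact Or.inl hδp
      · by_cases h2 : x = b
        · subst h2; exact Or.inl hbδ
        · rcases (Equiv.Perm.disjoint_iff_eq_or_eq.mp hdisj) x with h | h
          · exact Or.inl h
          · right; rw [mul_apply, swap_apply_of_ne_of_ne h1 h2, h]
    have e1 : g * swap p b = δ * (γ * swap p b) := by rw [← hg, mul_assoc]
    have hct1 : g.cycleType = δ.cycleType + {γ.support.card} := by
      rw [← hg, hdisj.cycleType_mul, hγc.cycleType]
    have hct2 : (g * swap p b).cycleType = δ.cycleType + {(γ * swap p b).support.card} := by
      rw [e1, hdisj'.cycleType_mul, hcyc'.cycleType]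
    have hfix : (Finset.univ.filter fun x => (g * swap p b) x = x) =
        (Finset.univ.filter fun x => g x = x) \ {b} := by
      ext x
      simp only [mem_filter, mem_univ, true_and, mem_sdiff, mem_singleton]
      by_cases h1 : x = p
      · subst h1
        rw [mul_apply, swap_apply_left, hb]
        simp [hpb, Ne.symm hpb, hgp]
      · by_cases h2 : x = b
        · subst h2
          rw [mul_apply, swap_apply_right]
          simp [hgpb, hb]
        · rw [mul_apply, swap_apply_of_ne_of_ne h1 h2]
          simp [h2]
    have hsub : ({b} : Finset α) ⊆ Finset.univ.filter fun x => g x = x := by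
      intro x hx
      simp only [mem_singleton] at hx
      subst hx; simp [hb]
    have hle := Finset.card_le_card hsub
    rw [Finset.card_singleton] at hle
    rw [cstat, cstat, hct1, hct2, hfix, Finset.card_sdiff_of_subset hsub, Finset.card_singleton]
    simp only [Multiset.card_add, Multiset.card_singleton]
    omega

end CycleLemma

section Up

private def castSuccEquiv (m : ℕ) : Fin m ≃ {x : Fin (m + 1) // x.val < m} where
  toFun i := ⟨i.castSucc, i.isLt⟩
  invFun x := ⟨x.1.val, x.2⟩
  left_inv i := rfl
  right_inv x := by
    apply Subtype.ext
    apply Fin.ext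
    rfl

private def up {m : ℕ} (e : Perm (Fin m)) : Perm (Fin (m + 1)) :=
  e.extendDomain (castSuccEquiv m)

private lemma up_castSucc {m : ℕ} (e : Perm (Fin m)) (i : Fin m) :
    up e i.castSucc = (e i).castSucc := by
  have := Equiv.Perm.extendDomain_apply_image e (castSuccEquiv m) i
  simpa [castSuccEquiv, up] using this

private lemma up_last {m : ℕ} (e : Perm (Fin m)) : up e (Fin.last m) = Fin.last m :=
  Equiv.Perm.extendDomain_apply_not_subtype e (castSuccEquiv m) (by simp)

private lemma up_swap {m : ℕ} (a b : Fin m) :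
    up (swap a b) = swap a.castSucc b.castSucc := by
  ext x
  induction x using Fin.lastCases with
  | last =>
    rw [up_last, swap_apply_of_ne_of_ne (Fin.castSucc_lt_last a).ne' (Fin.castSucc_lt_last b).ne']
  | cast i =>
    rw [up_castSucc]
    exact congrArg Fin.val ((Fin.castSucc_injective m).swap_apply a b i).symm

private lemma up_list_prod {m : ℕ} (l : List (Perm (Fin m))) :
    (l.map up).prod = up l.prod := by
  have h : up (m := m) = ⇑(Equiv.Perm.extendDomainHom (castSuccEquiv m)) := rfl
  rw [h, ← MonoidHom.map_list_prod]

private lemma cstat_up {m : ℕ} (e : Perm (Fin m)) : cstat (up e) = cstat e + 1 := by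
  have hct : (up e).cycleType = e.cycleType := Equiv.Perm.cycleType_extendDomain _
  have hfix : (Finset.univ.filter fun x => up e x = x).card =
      (Finset.univ.filter fun x => e x = x).card + 1 := by
    rw [Finset.card_filter, Finset.card_filter, Fin.sum_univ_castSucc]
    simp [up_castSucc, Fin.castSucc_inj, up_last]
  rw [cstat, cstat, hct, hfix]
  omega

end Up

section Psi

private def psi {m : ℕ} (pe : Fin (m + 1) × Perm (Fin m)) : Perm (Fin (m + 1)) :=
  up pe.2 * swap pe.1 (Fin.last m)

private lemma psi_apply_fst {m : ℕ} (p : Fin (m + 1)) (e : Perm (Fin m)) :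
    psi (p, e) p = Fin.last m := by
  rw [psi, mul_apply, swap_apply_left, up_last]

private lemma psi_bijective {m : ℕ} : Function.Bijective (psi (m := m)) := by
  rw [Fintype.bijective_iff_injective_and_card]
  constructor
  · rintro ⟨p, e⟩ ⟨p', e'⟩ h
    have h1 : psi (p, e) p = psi (p', e') p := by rw [h]
    rw [psi_apply_fst p e] at h1
    have hp : p' = p := (psi (p', e')).injective ((psi_apply_fst p' e').trans h1)
    subst hp
    have hu : up e = up e' := mul_right_cancel h
    have he : e = e' := by
      ext i
      have h2 := congrArg (fun f : Perm (Fin (m + 1)) => f i.castSucc) hu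
      simp only [up_castSucc] at h2
      exact congrArg Fin.val (Fin.castSucc_inj.mp h2)
    rw [he]
  · simp [Fintype.card_perm, Nat.factorial_succ]

private lemma cstat_psi {m : ℕ} (p : Fin (m + 1)) (e : Perm (Fin m)) :
    cstat (psi (p, e)) = cstat e + (if p = Fin.last m then 1 else 0) := by
  by_cases hp : p = Fin.last m
  · rw [if_pos hp, psi]
    simp only [hp, swap_self]
    rw [show (Equiv.refl (Fin (m + 1)) : Perm (Fin (m + 1))) = 1 from rfl, mul_one]
    exact cstat_up e
  · rw [if_neg hp, add_zero, psi]
    show cstat (up e * swap p (Fin.last m)) = cstat e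
    have h := cstat_mul_swap (up e) (up_last e) hp
    have h2 := cstat_up e
    omega

private lemma psi_list {m : ℕ} (p : Fin (m + 1)) (e : Perm (Fin m))
    (l : List (Fin m × Fin m))
    (h1 : ∀ q ∈ l, q.1 < q.2) (h2 : (l.map Prod.snd).Pairwise (· < ·))
    (h3 : (l.map fun q => swap q.1 q.2).prod = e) :
    ∃ l' : List (Fin (m + 1) × Fin (m + 1)),
      (∀ q ∈ l', q.1 < q.2) ∧ ((l'.map Prod.snd).Pairwise (· < ·)) ∧
      (l'.map fun q => swap q.1 q.2).prod = psi (p, e) ∧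
      (l'.map fun q => q.2.val - q.1.val).sum
        = (l.map fun q => q.2.val - q.1.val).sum + (m - p.val) := by
  classical
  refine ⟨l.map (fun q => (q.1.castSucc, q.2.castSucc)) ++
    (if p = Fin.last m then [] else [(p, Fin.last m)]), ?_, ?_, ?_, ?_⟩
  · intro q hq
    rw [List.mem_append] at hq
    rcases hq with hq | hq
    · obtain ⟨r, hr, rfl⟩ := List.mem_map.mp hq
      exact Fin.castSucc_lt_castSucc_iff.mpr (h1 r hr)
    · by_cases hp : p = Fin.last m
      · simp [hp] at hq
      · simp only [if_neg hp, List.mem_singleton] at hq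
        subst hq
        exact lt_of_le_of_ne (Fin.le_last p) hp
  · rw [List.map_append, List.map_map]
    rw [List.pairwise_append]
    refine ⟨?_, ?_, ?_⟩
    · have hc : (Prod.snd ∘ fun q : Fin m × Fin m => (q.1.castSucc, q.2.castSucc))
          = Fin.castSucc ∘ Prod.snd := rfl
      rw [hc, ← List.map_map]
      exact List.Pairwise.map _ (fun a b hab => Fin.castSucc_lt_castSucc_iff.mpr hab) h2
    · by_cases hp : p = Fin.last m <;> simp [hp]
    · intro x hx y hy
      by_cases hp : p = Fin.last m
      · simp [hp] at hy
      · simp only [if_neg hp, List.map_cons, List.map_nil, List.mem_singleton] at hy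
        subst hy
        obtain ⟨r, _, rfl⟩ := List.mem_map.mp hx
        exact Fin.castSucc_lt_last _
  · rw [List.map_append, List.prod_append, List.map_map]
    have hmap : (l.map ((fun q : Fin (m + 1) × Fin (m + 1) => swap q.1 q.2)
        ∘ fun q : Fin m × Fin m => (q.1.castSucc, q.2.castSucc)))
        = (l.map fun q => swap q.1 q.2).map up := by
      rw [List.map_map]
      apply List.map_congr_left
      intro q _
      exact (up_swap q.1 q.2).symm
    rw [hmap, up_list_prod, h3]
    by_cases hp : p = Fin.last m
    · rw [if_pos hp]
      simp only [List.map_nil, List.prod_nil, mul_one, psi, hp, swap_self]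
      show up e = up e * (1 : Perm (Fin (m + 1)))
      rw [mul_one]
    · rw [if_neg hp]
      simp only [List.map_cons, List.map_nil, List.prod_cons, List.prod_nil, mul_one]
      rfl
  · rw [List.map_append, List.sum_append, List.map_map]
    have hmap : (l.map ((fun q : Fin (m + 1) × Fin (m + 1) => q.2.val - q.1.val)
        ∘ fun q : Fin m × Fin m => (q.1.castSucc, q.2.castSucc)))
        = l.map fun q => q.2.val - q.1.val := by
      apply List.map_congr_left
      intro q _
      simp
    rw [hmap]
    by_cases hp : p = Fin.last m
    · simp [hp, Fin.val_last]
    · simp [hp, Fin.val_last]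

end Psi

section Factors

variable {R : Type*} [CommRing R] (q t : R)

private lemma factor_last (m : ℕ) :
    (∑ p : Fin (m + 1), q ^ (m - (p : ℕ)) * t ^ (if p = Fin.last m then 1 else 0))
      = t + (∑ j ∈ Finset.range (m + 1), q ^ j) - 1 := by
  have h3 : ∑ j ∈ Finset.range m, q ^ (m - j) = ∑ j ∈ Finset.range m, q ^ (j + 1) := by
    rw [← Finset.sum_range_reflect (fun j => q ^ (j + 1)) m]
    apply Finset.sum_congr rfl
    intro j hj
    rw [Finset.mem_range] at hj
    congr 1
    omega
  rw [Fin.sum_univ_castSucc]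
  have h1 : ∀ j : Fin m, (j.castSucc = Fin.last m) = False := fun j => by
    simp [(Fin.castSucc_lt_last j).ne]
  simp only [h1, if_false, Fin.val_last, Nat.sub_self, Fin.coe_castSucc, eq_self_iff_true,
    if_true, pow_zero, pow_one, mul_one, one_mul]
  rw [Fin.sum_univ_eq_sum_range (fun j => q ^ (m - j)) m, h3, Finset.sum_range_succ']
  ring

private lemma factor_zero (n : ℕ) :
    (∑ p : Fin (n + 1), q ^ (p : ℕ) * t ^ (if p = 0 then 1 else 0))
      = t + (∑ j ∈ Finset.range (n + 1), q ^ j) - 1 := by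
  rw [Fin.sum_univ_succ]
  have h1 : ∀ j : Fin n, (j.succ = (0 : Fin (n + 1))) = False := fun j => by
    simp [Fin.succ_ne_zero]
  simp only [h1, if_false, Fin.val_zero, Fin.val_succ, eq_self_iff_true, if_true,
    pow_zero, pow_one, mul_one, one_mul]
  rw [Fin.sum_univ_eq_sum_range (fun j => q ^ (j + 1)) n, Finset.sum_range_succ']
  ring

end Factors

section Phi

private def phi {n : ℕ} (pe : Fin (n + 1) × Perm (Fin n)) : Perm (Fin (n + 1)) :=
  (finSuccEquiv' 0).trans ((Equiv.optionCongr pe.2).trans (finSuccEquiv' pe.1).symm)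

private lemma phi_zero {n : ℕ} (pe : Fin (n + 1) × Perm (Fin n)) : phi pe 0 = pe.1 := by
  simp [phi, Equiv.trans_apply, finSuccEquiv'_at, finSuccEquiv'_symm_none]

private lemma phi_succ {n : ℕ} (pe : Fin (n + 1) × Perm (Fin n)) (i : Fin n) :
    phi pe i.succ = pe.1.succAbove (pe.2 i) := by
  have h : finSuccEquiv' (0 : Fin (n + 1)) i.succ = some i :=
    finSuccEquiv'_above (Fin.zero_le _)
  simp [phi, Equiv.trans_apply, h, finSuccEquiv'_symm_some]

private lemma phi_bijective {n : ℕ} : Function.Bijective (phi (n := n)) := by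
  rw [Fintype.bijective_iff_injective_and_card]
  constructor
  · rintro ⟨p, e⟩ ⟨p', e'⟩ h
    have hp : p = p' := by
      have := congrArg (fun f : Perm (Fin (n + 1)) => f 0) h
      simpa [phi_zero] using this
    subst hp
    have he : e = e' := by
      ext i
      have h2 := congrArg (fun f : Perm (Fin (n + 1)) => f i.succ) h
      simp only [phi_succ] at h2
      have := Fin.succAbove_right_injective (p := p) h2
      exact congrArg Fin.val this
    rw [he]
  · simp [Fintype.card_perm, Nat.factorial_succ]

private lemma inv_phi {n : ℕ} (p : Fin (n + 1)) (e : Perm (Fin n)) :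
    invStat (phi (p, e)) = p.val + invStat e := by
  rw [invStat_eq_sum, invStat_eq_sum, Fin.sum_univ_succ]
  congr 1
  · -- row a = 0
    rw [Fin.sum_univ_succ]
    rw [if_neg (by simp : ¬((0 : Fin (n + 1)) < 0 ∧ phi (p, e) 0 < phi (p, e) 0)), zero_add]
    have hterm : ∀ j : Fin n,
        (if (0 : Fin (n + 1)) < j.succ ∧ phi (p, e) j.succ < phi (p, e) 0 then 1 else 0)
          = if (e j : ℕ) < (p : ℕ) then 1 else 0 := by
      intro j
      congr 1
      rw [phi_succ, phi_zero]
      simp only [eq_iff_iff]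
      constructor
      · rintro ⟨-, h⟩
        have := (Fin.succAbove_lt_iff_castSucc_lt p (e j)).mp h
        simpa [Fin.lt_def] using this
      · intro h
        refine ⟨Fin.succ_pos _, (Fin.succAbove_lt_iff_castSucc_lt p (e j)).mpr ?_⟩
        simpa [Fin.lt_def] using h
    rw [Finset.sum_congr rfl fun j _ => hterm j]
    rw [Equiv.sum_comp e (fun v : Fin n => if (v : ℕ) < (p : ℕ) then 1 else 0)]
    rw [← Finset.card_filter]
    exact card_filter_val_lt (Nat.lt_succ_iff.mp p.isLt)
  · -- rows a = succ i
    apply Finset.sum_congr rfl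
    intro i _
    rw [Fin.sum_univ_succ]
    rw [if_neg (fun hcon => Fin.not_lt_zero _ hcon.1 :
      ¬(i.succ < (0 : Fin (n + 1)) ∧ phi (p, e) 0 < phi (p, e) i.succ)), zero_add]
    apply Finset.sum_congr rfl
    intro j _
    congr 1
    rw [phi_succ, phi_succ]
    simp only [eq_iff_iff, Fin.succ_lt_succ_iff, Fin.succAbove_lt_succAbove_iff]

private lemma rmin_phi {n : ℕ} (p : Fin (n + 1)) (e : Perm (Fin n)) :
    rminStat (phi (p, e)) = rminStat e + (if p = 0 then 1 else 0) := by
  rw [rminStat_eq_sum, rminStat_eq_sum, Fin.sum_univ_succ]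
  have h0 : (∀ j, (0 : Fin (n + 1)) < j → phi (p, e) 0 < phi (p, e) j) ↔ p = 0 := by
    constructor
    · intro h
      by_contra hp
      have hn : 0 < n := by
        have hp' : (p : ℕ) ≠ 0 := fun h => hp (Fin.ext h)
        have := p.isLt
        omega
      set z : Fin n := ⟨0, hn⟩ with hzdef
      have hz0 : Fin.castSucc z = 0 := Fin.ext rfl
      have hz : phi (p, e) (Fin.succ (e.symm z)) = 0 := by
        rw [phi_succ]
        show p.succAbove (e (e.symm z)) = 0
        rw [Equiv.apply_symm_apply, ← hz0]
        apply Fin.succAbove_of_castSucc_lt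
        rw [hz0]
        exact Fin.pos_iff_ne_zero.mpr hp
      have hlt := h _ (Fin.succ_pos (e.symm z))
      rw [hz, phi_zero] at hlt
      exact Fin.not_lt_zero _ hlt
    · intro hp j hj
      subst hp
      have h0' : phi ((0 : Fin (n + 1)), e) 0 = 0 := phi_zero _
      rw [h0', Fin.pos_iff_ne_zero]
      intro hj0
      exact hj.ne' ((phi ((0 : Fin (n + 1)), e)).injective (hj0.trans h0'.symm))
  rw [if_congr h0 rfl rfl]
  have hterm : ∀ i : Fin n,
      (if (∀ j, i.succ < j → phi (p, e) i.succ < phi (p, e) j) then 1 else 0)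
        = if (∀ j, i < j → e i < e j) then 1 else 0 := by
    intro i
    apply if_congr _ rfl rfl
    constructor
    · intro h j' hj'
      have := h j'.succ (Fin.succ_lt_succ_iff.mpr hj')
      rw [phi_succ, phi_succ] at this
      exact Fin.succAbove_lt_succAbove_iff.mp this
    · intro h j hj
      induction j using Fin.cases with
      | zero => exact absurd hj (Fin.not_lt_zero _)
      | succ j' =>
        rw [phi_succ, phi_succ]
        exact Fin.succAbove_lt_succAbove_iff.mpr (h j' (Fin.succ_lt_succ_iff.mp hj))
  rw [Finset.sum_congr rfl fun i _ => hterm i]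
  exact add_comm _ _

end Phi

section MainSums

variable {R : Type*} [CommRing R] (q t : R)

private lemma inv_side : ∀ n : ℕ,
    ∑ σ : Perm (Fin n), q ^ invStat σ * t ^ rminStat σ
      = ∏ i ∈ Finset.range n, (t + (∑ j ∈ Finset.range (i + 1), q ^ j) - 1) := by
  intro n
  induction n with
  | zero =>
    rw [Finset.prod_range_zero]
    have h : ∀ σ : Perm (Fin 0), q ^ invStat σ * t ^ rminStat σ = 1 := by
      intro σ
      rw [invStat_eq_sum, rminStat_eq_sum]
      simp
    rw [Finset.sum_congr rfl fun σ _ => h σ]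
    simp [Finset.card_univ, Fintype.card_perm]
  | succ n ih =>
    rw [← Fintype.sum_bijective phi phi_bijective
      (fun pe => q ^ invStat (phi pe) * t ^ rminStat (phi pe))
      (fun σ => q ^ invStat σ * t ^ rminStat σ) (fun pe => rfl)]
    have hterm : ∀ pe : Fin (n + 1) × Perm (Fin n),
        q ^ invStat (phi pe) * t ^ rminStat (phi pe)
          = (q ^ (pe.1 : ℕ) * t ^ (if pe.1 = 0 then 1 else 0))
            * (q ^ invStat pe.2 * t ^ rminStat pe.2) := by
      rintro ⟨p, e⟩
      rw [inv_phi, rmin_phi, pow_add, pow_add]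
      ring
    rw [Finset.sum_congr rfl fun pe _ => hterm pe]
    rw [Fintype.sum_prod_type]
    dsimp only
    rw [← Finset.sum_mul_sum (f := fun x : Fin (n + 1) => q ^ (x : ℕ) * t ^ (if x = 0 then 1 else 0))
      (g := fun y : Perm (Fin n) => q ^ invStat y * t ^ rminStat y)]
    rw [ih, factor_zero, Finset.prod_range_succ]
    ring

private lemma sor_side : ∀ m : ℕ, ∃ s : Perm (Fin m) → ℕ,
    (∀ σ : Perm (Fin m), ∃ l : List (Fin m × Fin m),
      (∀ r ∈ l, r.1 < r.2) ∧ ((l.map Prod.snd).Pairwise (· < ·)) ∧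
      (l.map fun r => swap r.1 r.2).prod = σ ∧
      (l.map fun r => r.2.val - r.1.val).sum = s σ) ∧
    (∑ σ : Perm (Fin m), q ^ s σ * t ^ cstat σ
      = ∏ i ∈ Finset.range m, (t + (∑ j ∈ Finset.range (i + 1), q ^ j) - 1)) := by
  intro m
  induction m with
  | zero =>
    refine ⟨fun _ => 0, fun σ => ⟨[], by simp, by simp, ?_, by simp⟩, ?_⟩
    · simp only [List.map_nil, List.prod_nil]
      ext x
      exact x.elim0
    · have hc : ∀ σ : Perm (Fin 0), cstat σ = 0 := by
        intro σ
        have hσ : σ = 1 := by ext x; exact x.elim0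
        subst hσ
        rw [cstat]
        simp [Equiv.Perm.cycleType_one]
      rw [Finset.prod_range_zero]
      have h : ∀ σ : Perm (Fin 0), q ^ (0 : ℕ) * t ^ cstat σ = 1 := by
        intro σ
        rw [hc σ]
        simp
      rw [Finset.sum_congr rfl fun σ _ => h σ]
      simp [Finset.card_univ, Fintype.card_perm]
  | succ m ih =>
    obtain ⟨s, hs1, hs2⟩ := ih
    set E : (Fin (m + 1) × Perm (Fin m)) ≃ Perm (Fin (m + 1)) :=
      Equiv.ofBijective psi psi_bijective with hE
    refine ⟨fun σ => s (E.symm σ).2 + (m - ((E.symm σ).1 : ℕ)), ?_, ?_⟩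
    · intro σ
      obtain ⟨l, h1, h2, h3, h4⟩ := hs1 (E.symm σ).2
      obtain ⟨l', g1, g2, g3, g4⟩ := psi_list (E.symm σ).1 (E.symm σ).2 l h1 h2 h3
      refine ⟨l', g1, g2, ?_, by rw [g4, h4]⟩
      rw [g3]
      have hEs : psi ((E.symm σ).1, (E.symm σ).2) = E (E.symm σ) := rfl
      rw [hEs, E.apply_symm_apply]
    · rw [← Fintype.sum_bijective psi psi_bijective
        (fun pe => q ^ (s ((E.symm (psi pe)).2) + (m - ((E.symm (psi pe)).1 : ℕ)))
          * t ^ cstat (psi pe))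
        (fun σ => q ^ (s ((E.symm σ).2) + (m - ((E.symm σ).1 : ℕ))) * t ^ cstat σ)
        (fun pe => rfl)]
      have hterm : ∀ pe : Fin (m + 1) × Perm (Fin m),
          q ^ (s ((E.symm (psi pe)).2) + (m - ((E.symm (psi pe)).1 : ℕ))) * t ^ cstat (psi pe)
            = (q ^ (m - (pe.1 : ℕ)) * t ^ (if pe.1 = Fin.last m then 1 else 0))
              * (q ^ s pe.2 * t ^ cstat pe.2) := by
        rintro ⟨p, e⟩
        have hsymm : E.symm (psi (p, e)) = (p, e) :=
          Equiv.ofBijective_symm_apply_apply _ _ _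
        rw [hsymm, cstat_psi, pow_add, pow_add]
        ring
      rw [Finset.sum_congr rfl fun pe _ => hterm pe]
      rw [Fintype.sum_prod_type]
      dsimp only
      rw [← Finset.sum_mul_sum (f := fun x : Fin (m + 1) => q ^ (m - (x : ℕ)) * t ^ (if x = Fin.last m then 1 else 0))
        (g := fun y : Perm (Fin m) => q ^ s y * t ^ cstat y)]
      rw [hs2, factor_last, Finset.prod_range_succ]
      ring

end MainSums

/-- `(inv, rmin)` and `(sor, cyc)` are jointly equidistributed over `S_n`, with
common generating function `∏_{i=1}^n (t + [i]_q - 1)`; here `sor` is the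
sorting index, defined via the unique factorization
`σ = (i_1 j_1)⋯(i_k j_k)`, `j_1 < ⋯ < j_k`, `i_s < j_s`, as `Σ_s (j_s - i_s)`. -/
theorem inv_rmin_sor_cyc_equidistributed (n : ℕ) (sor : Equiv.Perm (Fin n) → ℕ)
    (hsor : ∀ (σ : Equiv.Perm (Fin n)) (l : List (Fin n × Fin n)),
      (∀ p ∈ l, p.1 < p.2) →
      (l.map Prod.snd).Pairwise (· < ·) →
      (l.map fun p => Equiv.swap p.1 p.2).prod = σ →
      sor σ = (l.map fun p => p.2.val - p.1.val).sum)
    (R : Type*) [CommRing R] (q t : R) :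
    (∑ σ : Equiv.Perm (Fin n), q ^ invStat σ * t ^ rminStat σ =
      ∑ σ : Equiv.Perm (Fin n), q ^ sor σ * t ^ cycStat σ) ∧
    ∑ σ : Equiv.Perm (Fin n), q ^ invStat σ * t ^ rminStat σ =
      ∏ i ∈ Finset.range n, (t + (∑ j ∈ Finset.range (i + 1), q ^ j) - 1) := by
  have hinv := inv_side q t n
  obtain ⟨s, hs1, hs2⟩ := sor_side q t n
  have hss : ∀ σ : Perm (Fin n), sor σ = s σ := by
    intro σ
    obtain ⟨l, h1, h2, h3, h4⟩ := hs1 σ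
    rw [hsor σ l h1 h2 h3, h4]
  refine ⟨?_, hinv⟩
  rw [hinv]
  have : ∑ σ : Perm (Fin n), q ^ sor σ * t ^ cycStat σ
      = ∑ σ : Perm (Fin n), q ^ s σ * t ^ cstat σ := by
    apply Finset.sum_congr rfl
    intro σ _
    rw [hss σ, cycStat_eq_cstat]
  rw [this, hs2]
end

section
/- The distribution of the length function ℓ over the colored permutation group G_{r,n} is given by Σ_{π ∈ G_{r,n}} q^{ℓ(π)} = [n]_q! · Π_{i=1}^n (1 + q^i [r-1]_q), where [n]_q! = [1]_q [2]_q ⋯ [n]_q and [m]_q = 1 + q + ⋯ + q^{m-1}. -/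
noncomputable section
open scoped Classical

/-- The colored permutation group `G_{r,n} = C_r ≀ S_n`, with elements `(σ, z)`
written in window notation `σ_1^{[z_1]} ⋯ σ_n^{[z_n]}`. -/
structure CPerm (r n : ℕ) where
  perm : Equiv.Perm (Fin n)
  col : Fin n → ZMod r

namespace CPerm

variable {r n : ℕ}

theorem ext' {a b : CPerm r n} (h1 : a.perm = b.perm) (h2 : a.col = b.col) : a = b := by
  cases a; cases b; cases h1; cases h2; rfl

instance : Mul (CPerm r n) :=
  ⟨fun a b => ⟨a.perm * b.perm, fun i => b.col i + a.col (b.perm i)⟩⟩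
instance : One (CPerm r n) := ⟨⟨1, 0⟩⟩
instance : Inv (CPerm r n) := ⟨fun a => ⟨a.perm⁻¹, fun i => - a.col (a.perm⁻¹ i)⟩⟩

@[simp] theorem mul_perm (a b : CPerm r n) : (a * b).perm = a.perm * b.perm := rfl
@[simp] theorem mul_col (a b : CPerm r n) (i : Fin n) :
    (a * b).col i = b.col i + a.col (b.perm i) := rfl
@[simp] theorem one_perm : (1 : CPerm r n).perm = 1 := rfl
@[simp] theorem one_col (i : Fin n) : (1 : CPerm r n).col i = 0 := rfl
@[simp] theorem inv_perm (a : CPerm r n) : (a⁻¹).perm = a.perm⁻¹ := rfl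
@[simp] theorem inv_col (a : CPerm r n) (i : Fin n) :
    (a⁻¹).col i = - a.col (a.perm⁻¹ i) := rfl

instance : Group (CPerm r n) :=
  Group.ofLeftAxioms
    (fun a b c => ext' (mul_assoc _ _ _)
      (by funext i; simp [mul_assoc, add_assoc]))
    (fun a => ext' (one_mul _) (by funext i; simp))
    (fun a => ext' (inv_mul_cancel _) (by funext i; simp))

instance instFintype [NeZero r] : Fintype (CPerm r n) :=
  Fintype.ofEquiv (Equiv.Perm (Fin n) × (Fin n → ZMod r))
    { toFun := fun p => ⟨p.1, p.2⟩
      invFun := fun g => (g.perm, g.col)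
      left_inv := fun _ => rfl
      right_inv := fun _ => rfl }

/-- The window notation letter at position `i`: the pair (base value, color). -/
def window (π : CPerm r n) (i : Fin n) : Fin n × ZMod r := (π.perm i, π.col i)

/-- The action of `π` on the colored letter `x = b^{[c]}`. -/
def actC (π : CPerm r n) (x : Fin n × ZMod r) : Fin n × ZMod r :=
  (π.perm x.1, x.2 + π.col x.1)

/-- The colored transposition `(i^{[t]} j)` (for `i < j`), resp. the coloring
operation `(i^{[t]} i)` when `i = j`. -/
def ct (i : Fin n) (t : ZMod r) (j : Fin n) : CPerm r n :=
  ⟨Equiv.swap i j, fun k => if k = j then t else if k = i then -t else 0⟩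

/-- The generator `s_0`, adding one to the color of the first letter. -/
def s0 (h : 0 < n) : CPerm r n := ⟨1, fun k => if k = ⟨0, h⟩ then 1 else 0⟩

/-- The standard generating set `{s_0, s_1, …, s_{n-1}}` of `G_{r,n}`. -/
def gens : Set (CPerm r n) :=
  {g | (∃ h : 0 < n, g = s0 h) ∨
       ∃ (i : Fin n) (h : i.val + 1 < n), g = ct i 0 ⟨i.val + 1, h⟩}

/-- Word length with respect to a set `S` of generators. -/
def lenWrt (S : Set (CPerm r n)) (π : CPerm r n) : ℕ :=
  sInf {k | ∃ l : List (CPerm r n), l.length = k ∧ (∀ g ∈ l, g ∈ S) ∧ l.prod = π}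

/-- The length function `ℓ` on `G_{r,n}` w.r.t. the generators `s_0, …, s_{n-1}`. -/
def len (π : CPerm r n) : ℕ := lenWrt gens π

/-- The set `T_n` of colored transpositions and coloring operations. -/
def Tset : Set (CPerm r n) :=
  {g | ∃ (i j : Fin n) (t : ZMod r), (i < j ∨ (i = j ∧ t ≠ 0)) ∧ g = ct i t j}

/-- The reflection-type length `ℓ'` on `G_{r,n}`. -/
def lenT (π : CPerm r n) : ℕ := lenWrt Tset π

/-- The linear order `n^{[r-1]} < ⋯ < 1^{[r-1]} < ⋯ < 1^{[1]} < 1 < ⋯ < n`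
on colored letters. -/
def clt (x y : Fin n × ZMod r) : Prop :=
  (x.2 = 0 ∧ y.2 = 0 ∧ x.1 < y.1) ∨ (x.2 ≠ 0 ∧ y.2 = 0) ∨
    (x.2 ≠ 0 ∧ y.2 ≠ 0 ∧ (y.1 < x.1 ∨ (x.1 = y.1 ∧ y.2.val < x.2.val)))

/-- The number of inversions of the window word of `π` w.r.t. the order `clt`. -/
def invStat (π : CPerm r n) : ℕ :=
  {p : Fin n × Fin n | p.1 < p.2 ∧ clt (window π p.2) (window π p.1)}.ncard

/-- `l` is the factorization of `π` into colored transpositions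
`(i_1^{[t_1]} j_1) ⋯ (i_k^{[t_k]} j_k)` with `j_1 < ⋯ < j_k`, each factor being
either a colored transposition (`i < j`, any `t`) or a coloring operation
(`i = j`, `t ≠ 0`). A factor is recorded as the triple `(i, t, j)`. -/
def IsSorFact (π : CPerm r n) (l : List (Fin n × ZMod r × Fin n)) : Prop :=
  (∀ x ∈ l, x.1 < x.2.2 ∨ (x.1 = x.2.2 ∧ x.2.1 ≠ 0)) ∧
  (l.map fun x => x.2.2).Pairwise (· < ·) ∧
  (l.map fun x => ct x.1 x.2.1 x.2.2).prod = π

/-- The contribution `j - i + χ(t > 0)·(2(i-1) + t)` of a factor `(i^{[t]} j)`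
to the sorting index (with `i, j` taken as `1`-based values). -/
def sorTerm (x : Fin n × ZMod r × Fin n) : ℕ :=
  (x.2.2.val - x.1.val) + if x.2.1 ≠ 0 then 2 * x.1.val + x.2.1.val else 0

/-- The refined colored cycle set `Cyc^t(π)`: smallest base values of the
colored cycles of `π` whose color sum is `t`. -/
def CycT (t : ZMod r) (π : CPerm r n) : Set (Fin n) :=
  {i | (∀ j, π.perm.SameCycle i j → i ≤ j) ∧
       (∑ j ∈ Finset.univ.filter fun j => π.perm.SameCycle i j, π.col j) = t}

/-- The Lehmer code of `π`: `Leh(π) i = (h_i, -z_i)` with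
`h_i = #{j ≤ i : σ_j ≤ σ_i}` (so `h_i` is `1`-based). -/
def Leh (π : CPerm r n) (i : Fin n) : ℕ × ZMod r :=
  ({j | j ≤ i ∧ π.perm j ≤ π.perm i}.ncard, - π.col i)

/-- The A-code: `A-code(π) = Leh(π⁻¹)`. -/
def Acode (π : CPerm r n) : Fin n → ℕ × ZMod r := Leh π⁻¹

/-- The smallest `k ≥ 1` such that the base value of `π^{-k}(i)` is at most `i`. -/
def kmin (π : CPerm r n) (i : Fin n) : ℕ :=
  sInf {k | 1 ≤ k ∧ (π⁻¹ ^ k).perm i ≤ i}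

/-- The B-code: `B-code(π) i = π^{-k_i}(i)` as a colored letter. -/
def Bcode (π : CPerm r n) (i : Fin n) : Fin n × ZMod r :=
  actC (π⁻¹ ^ kmin π i) (i, (0 : ZMod r))

/-- Right-to-left minimum letters of color `t` (base values). -/
def RmilT (t : ZMod r) (π : CPerm r n) : Set (Fin n) :=
  {b | ∃ i, π.perm i = b ∧ π.col i = t ∧ ∀ j, i < j → π.perm i < π.perm j}

/-- Left-to-right minimum letters of color `t` (base values). -/
def LmilT (t : ZMod r) (π : CPerm r n) : Set (Fin n) :=
  {b | ∃ i, π.perm i = b ∧ π.col i = t ∧ ∀ j, j < i → π.perm i < π.perm j}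

/-- Left-to-right maximum letters of color `t` (base values). -/
def LmalT (t : ZMod r) (π : CPerm r n) : Set (Fin n) :=
  {b | ∃ i, π.perm i = b ∧ π.col i = t ∧ ∀ j, j < i → π.perm j < π.perm i}

/-- Left-to-right maximum places of color `t`. -/
def LmapT (t : ZMod r) (π : CPerm r n) : Set (Fin n) :=
  {i | π.col i = t ∧ ∀ j, j < i → π.perm j < π.perm i}

/-- Right-to-left minimum letters of `π` (as colored letters). -/
def RmilSet (π : CPerm r n) : Set (Fin n × ZMod r) :=
  {x | ∃ i, window π i = x ∧ ∀ j, i < j → π.perm i < π.perm j}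

/-- Left-to-right minimum letters of `π` (as colored letters). -/
def LmilSet (π : CPerm r n) : Set (Fin n × ZMod r) :=
  {x | ∃ i, window π i = x ∧ ∀ j, j < i → π.perm i < π.perm j}

/-- Left-to-right maximum letters of `π` (as colored letters). -/
def LmalSet (π : CPerm r n) : Set (Fin n × ZMod r) :=
  {x | ∃ i, window π i = x ∧ ∀ j, j < i → π.perm j < π.perm i}

/-- Left-to-right maximum places of `π` (as colored places `i^{[z_i]}`). -/
def LmapSet (π : CPerm r n) : Set (Fin n × ZMod r) :=
  {x | π.col x.1 = x.2 ∧ ∀ j, j < x.1 → π.perm j < π.perm x.1}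

/-- The `k`-th letter `π^k(1)` of the orbit word `π(1) π²(1) π³(1) ⋯`. -/
def orbitWord (π : CPerm r n) (h : 0 < n) (k : ℕ) : Fin n × ZMod r :=
  actC (π ^ k) (⟨0, h⟩, (0 : ZMod r))

/-- `Lmic(π)`: left-to-right minimum letters of the word `π(1) π²(1) π³(1) ⋯`. -/
def LmicSet (π : CPerm r n) : Set (Fin n × ZMod r) :=
  {x | ∃ (h : 0 < n) (k : ℕ), 1 ≤ k ∧ orbitWord π h k = x ∧
        ∀ m, 1 ≤ m → m < k → (orbitWord π h k).1 < (orbitWord π h m).1}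

/-- The color-`t` part of `Lmic(π)`. -/
def LmicT (t : ZMod r) (π : CPerm r n) : Set (Fin n) :=
  {b | (b, t) ∈ LmicSet π}

end CPerm

theorem Equiv.Perm.apply_inv_self {α : Type*} (f : Equiv.Perm α) (x : α) : f (f⁻¹ x) = x :=
  f.apply_symm_apply x

theorem Equiv.Perm.inv_apply_self {α : Type*} (f : Equiv.Perm α) (x : α) : f⁻¹ (f x) = x :=
  f.symm_apply_apply x

namespace CPerm

variable {r n : ℕ}

/-- Inversion pairs of the window word w.r.t. `clt`. -/
def invF (π : CPerm r n) : Finset (Fin n × Fin n) :=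
  Finset.univ.filter (fun p => p.1 < p.2 ∧ clt (window π p.2) (window π p.1))

/-- The color contribution to the length. -/
def colsum (π : CPerm r n) : ℕ :=
  ∑ i : Fin n, if π.col i ≠ 0 then (π.perm i).val + (π.col i).val else 0

/-- The closed-form length statistic. -/
def stat (π : CPerm r n) : ℕ := (invF π).card + colsum π

theorem clt_asymm {x y : Fin n × ZMod r} (h : clt x y) : ¬ clt y x := by
  intro g
  rcases h with ⟨h1,h2,h3⟩|⟨h1,h2⟩|⟨h1,h2,h3|⟨h3,h4⟩⟩ <;>
    rcases g with ⟨g1,g2,g3⟩|⟨g1,g2⟩|⟨g1,g2,g3|⟨g3,g4⟩⟩ <;>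
    first
      | exact absurd g3 (lt_asymm h3)
      | exact h1 g2
      | exact g1 h2
      | exact h1 g1
      | exact g1 h1
      | exact h1 h2
      | exact g1 g2
      | exact absurd g3.symm (ne_of_lt h3)
      | exact absurd h3.symm (ne_of_lt g3)
      | omega

theorem clt_total {x y : Fin n × ZMod r} (h : x.1 ≠ y.1) : clt x y ∨ clt y x := by
  by_cases hx : x.2 = 0 <;> by_cases hy : y.2 = 0
  · rcases lt_or_gt_of_ne h with h' | h'
    · exact Or.inl (Or.inl ⟨hx, hy, h'⟩)
    · exact Or.inr (Or.inl ⟨hy, hx, h'⟩)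
  · exact Or.inr (Or.inr (Or.inl ⟨hy, hx⟩))
  · exact Or.inl (Or.inr (Or.inl ⟨hx, hy⟩))
  · rcases lt_or_gt_of_ne h with h' | h'
    · exact Or.inr (Or.inr (Or.inr ⟨hy, hx, Or.inl h'⟩))
    · exact Or.inl (Or.inr (Or.inr ⟨hx, hy, Or.inl h'⟩))

theorem window_mul_ct0 (π : CPerm r n) (i j k : Fin n) :
    window (π * ct i 0 j) k = window π (Equiv.swap i j k) := by
  simp only [window, ct, mul_perm, mul_col, Equiv.Perm.mul_apply]
  rw [Prod.ext_iff]
  constructor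
  · rfl
  · show (if k = j then (0:ZMod r) else if k = i then -0 else 0) + _ = _
    simp

theorem window_mul_s0 (π : CPerm r n) (h : 0 < n) (k : Fin n) :
    window (π * s0 h) k
      = (π.perm k, π.col k + if k = ⟨0, h⟩ then 1 else 0) := by
  simp only [window, s0, mul_perm, mul_col, Equiv.Perm.mul_apply]
  rw [Prod.ext_iff]
  constructor
  · rfl
  · show (if k = ⟨0,h⟩ then (1:ZMod r) else 0) + π.col _ = _
    show _ = π.col ((1 : Equiv.Perm (Fin n)) k) + _
    simp [add_comm]

theorem stat_one : stat (1 : CPerm r n) = 0 := by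
  have h1 : invF (1 : CPerm r n) = ∅ := by
    ext p
    simp only [invF, Finset.mem_filter, Finset.mem_univ, true_and,
      Finset.notMem_empty, iff_false, not_and]
    intro hp hc
    have : window (1 : CPerm r n) p.2 = (p.2, 0) := rfl
    have h2 : window (1 : CPerm r n) p.1 = (p.1, 0) := rfl
    rw [this, h2] at hc
    rcases hc with ⟨-,-,hc⟩|⟨hc,-⟩|⟨hc,-⟩
    · exact lt_asymm hp hc
    · exact hc rfl
    · exact hc rfl
  have h2 : colsum (1 : CPerm r n) = 0 := by
    simp [colsum]
  simp [stat, h1, h2]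

theorem card_filter_perm_lt (π : CPerm r n) (t : Fin n) :
    (Finset.univ.filter fun b => π.perm b < t).card = t.val := by
  rw [← Fin.card_Iio (b := t)]
  apply Finset.card_bij (fun b _ => π.perm b)
  · intro a ha
    simp only [Finset.mem_filter] at ha
    simpa [Finset.mem_Iio] using ha.2
  · intro a _ b _ hab
    exact π.perm.injective hab
  · intro b hb
    exact ⟨π.perm⁻¹ b, by simpa [Finset.mem_Iio] using hb, by simp⟩

theorem fin_zero_lt {h : 0 < n} {b : Fin n} (hb : b ≠ ⟨0, h⟩) : (⟨0, h⟩ : Fin n) < b := by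
  rw [Fin.lt_def]
  exact Nat.pos_of_ne_zero fun hv => hb (Fin.ext hv)

/-- Splitting the inversion count by whether the first coordinate is position 0. -/
theorem invF_card_split (π : CPerm r n) (h : 0 < n) :
    (invF π).card
      = (Finset.univ.filter fun b => (⟨0, h⟩ : Fin n) < b ∧
          clt (window π b) (window π ⟨0, h⟩)).card
        + ((invF π).filter fun p => p.1 ≠ ⟨0, h⟩).card := by
  rw [← Finset.card_filter_add_card_filter_not (s := invF π)
    (p := fun p => p.1 = ⟨0, h⟩)]
  congr 1
  apply Finset.card_bij (fun p _ => p.2)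
  · intro p hp
    simp only [Finset.mem_filter, invF, Finset.mem_univ, true_and] at hp ⊢
    obtain ⟨⟨h1, h2⟩, h3⟩ := hp
    rw [h3] at h1 h2
    exact ⟨h1, h2⟩
  · intro p hp q hq hpq
    simp only [Finset.mem_filter] at hp hq
    exact Prod.ext (hp.2.trans hq.2.symm) hpq
  · intro b hb
    simp only [Finset.mem_filter, invF, Finset.mem_univ, true_and] at hb ⊢
    exact ⟨(⟨⟨0, h⟩, b⟩ : Fin n × Fin n), ⟨⟨hb.1, hb.2⟩, rfl⟩, rfl⟩

theorem window_def (π : CPerm r n) (i : Fin n) :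
    window π i = (π.perm i, π.col i) := rfl

theorem stat_mul_s0 [NeZero r] (π : CPerm r n) (h : 0 < n) :
    (π.col ⟨0, h⟩ + 1 ≠ 0 → stat (π * s0 h) = stat π + 1) ∧
    (π.col ⟨0, h⟩ + 1 = 0 → stat (π * s0 h) ≤ stat π) := by
  have hwτ : ∀ k, k ≠ ⟨0, h⟩ → window (π * s0 h) k = window π k := by
    intro k hk
    rw [window_mul_s0, window_def, if_neg hk, add_zero]
  have hwτ0 : window (π * s0 h) ⟨0, h⟩
      = (π.perm ⟨0, h⟩, π.col ⟨0, h⟩ + 1) := by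
    rw [window_mul_s0, if_pos rfl]
  have hτperm : (π * s0 h).perm = π.perm := by
    show π.perm * 1 = π.perm
    rw [mul_one]
  -- inversion splittings, normalized
  have hsplitπ : (invF π).card
      = (Finset.univ.filter fun b => (⟨0, h⟩ : Fin n) < b ∧
          clt (window π b) (π.perm ⟨0, h⟩, π.col ⟨0, h⟩)).card
        + ((invF π).filter fun p => p.1 ≠ ⟨0, h⟩).card := by
    have := invF_card_split π h
    rwa [window_def π ⟨0, h⟩] at this
  have hrest : ((invF (π * s0 h)).filter fun p => p.1 ≠ ⟨0, h⟩)
      = ((invF π).filter fun p => p.1 ≠ ⟨0, h⟩) := by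
    ext p
    simp only [Finset.mem_filter, invF, Finset.mem_univ, true_and]
    constructor
    · rintro ⟨⟨h1, h2⟩, h3⟩
      have h4 : p.2 ≠ ⟨0, h⟩ := by
        intro hp2
        exact absurd (hp2 ▸ h1) (not_lt.2 (Fin.le_def.2 (Nat.zero_le _)))
      rw [hwτ _ h4, hwτ _ h3] at h2
      exact ⟨⟨h1, h2⟩, h3⟩
    · rintro ⟨⟨h1, h2⟩, h3⟩
      have h4 : p.2 ≠ ⟨0, h⟩ := by
        intro hp2
        exact absurd (hp2 ▸ h1) (not_lt.2 (Fin.le_def.2 (Nat.zero_le _)))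
      rw [← hwτ _ h4, ← hwτ _ h3] at h2
      exact ⟨⟨h1, h2⟩, h3⟩
  have hsplitτ : (invF (π * s0 h)).card
      = (Finset.univ.filter fun b => (⟨0, h⟩ : Fin n) < b ∧
          clt (window π b) (π.perm ⟨0, h⟩, π.col ⟨0, h⟩ + 1)).card
        + ((invF π).filter fun p => p.1 ≠ ⟨0, h⟩).card := by
    have h0 := invF_card_split (π * s0 h) h
    rw [hrest] at h0
    rw [h0]
    congr 1
    apply Finset.card_nbij id
    · intro b hb
      simp only [Finset.mem_coe, Finset.mem_filter, Finset.mem_univ, true_and] at hb ⊢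
      rw [hwτ _ (ne_of_gt hb.1), hwτ0] at hb
      exact ⟨hb.1, hb.2⟩
    · intro a _ b _ hab
      exact hab
    · intro b hb
      simp only [Finset.mem_coe, Finset.mem_filter, Finset.mem_univ, true_and] at hb
      refine ⟨b, ?_, rfl⟩
      simp only [Finset.mem_coe, Finset.mem_filter, Finset.mem_univ, true_and]
      rw [hwτ _ (ne_of_gt hb.1), hwτ0]
      exact ⟨hb.1, hb.2⟩
  -- counting lemmas
  have hbase : (Finset.univ.filter fun b =>
        (⟨0, h⟩ : Fin n) < b ∧ π.perm b < π.perm ⟨0, h⟩).card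
      = (π.perm ⟨0, h⟩).val := by
    rw [← card_filter_perm_lt π (π.perm ⟨0, h⟩)]
    congr 1
    ext b
    simp only [Finset.mem_filter, Finset.mem_univ, true_and, and_iff_right_iff_imp]
    intro hb
    refine fin_zero_lt (fun hbz => ?_)
    rw [hbz] at hb
    exact lt_irrefl _ hb
  have hpermne : ∀ b : Fin n, (⟨0, h⟩ : Fin n) < b → π.perm b ≠ π.perm ⟨0, h⟩ := by
    intro b hb hbeq
    exact absurd (π.perm.injective hbeq) (ne_of_gt hb)
  have hkey : ∀ x : ZMod r, x ≠ 0 →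
      (Finset.univ.filter fun b => (⟨0, h⟩ : Fin n) < b ∧
          clt (window π b) (π.perm ⟨0, h⟩, (0 : ZMod r))).card
        = (Finset.univ.filter fun b => (⟨0, h⟩ : Fin n) < b ∧
            clt (window π b) (π.perm ⟨0, h⟩, x)).card + (π.perm ⟨0, h⟩).val := by
    intro x hx
    rw [← hbase, ← Finset.card_union_of_disjoint]
    · apply congrArg Finset.card
      ext b
      simp only [Finset.mem_filter, Finset.mem_union, Finset.mem_univ, true_and]
      simp only [window_def]
      constructor
      · rintro ⟨h1, h2⟩
        rcases h2 with ⟨g1, -, g3⟩ | ⟨g1, -⟩ | ⟨-, g2, -⟩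
        · exact Or.inr ⟨h1, g3⟩
        · rcases lt_or_gt_of_ne (hpermne b h1) with h' | h'
          · exact Or.inr ⟨h1, h'⟩
          · exact Or.inl ⟨h1, Or.inr (Or.inr ⟨g1, hx, Or.inl h'⟩)⟩
        · exact absurd rfl g2
      · rintro (⟨h1, h2⟩ | ⟨h1, h2⟩)
        · rcases h2 with ⟨-, g2, -⟩ | ⟨-, g2⟩ | ⟨g1, -, -⟩
          · exact absurd g2 hx
          · exact absurd g2 hx
          · exact ⟨h1, Or.inr (Or.inl ⟨g1, rfl⟩)⟩
        · refine ⟨h1, ?_⟩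
          by_cases hcb : π.col b = 0
          · exact Or.inl ⟨hcb, rfl, h2⟩
          · exact Or.inr (Or.inl ⟨hcb, rfl⟩)
    · rw [Finset.disjoint_filter]
      rintro b - ⟨-, h2⟩ ⟨-, h4⟩
      rcases h2 with ⟨-, g2, -⟩ | ⟨-, g2⟩ | ⟨-, -, g3 | ⟨g3, -⟩⟩
      · exact absurd g2 hx
      · exact absurd g2 hx
      · exact absurd h4 (not_lt.2 (le_of_lt g3))
      · exact absurd g3 (ne_of_lt h4)
  have hkey2 : ∀ x y : ZMod r, x ≠ 0 → y ≠ 0 →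
      (Finset.univ.filter fun b => (⟨0, h⟩ : Fin n) < b ∧
          clt (window π b) (π.perm ⟨0, h⟩, x)).card
        = (Finset.univ.filter fun b => (⟨0, h⟩ : Fin n) < b ∧
            clt (window π b) (π.perm ⟨0, h⟩, y)).card := by
    intro x y hx hy
    apply congrArg Finset.card
    ext b
    simp only [Finset.mem_filter, Finset.mem_univ, true_and]
    simp only [window_def]
    constructor
    · rintro ⟨h1, h2⟩
      rcases h2 with ⟨-, g2, -⟩ | ⟨-, g2⟩ | ⟨g1, -, g3 | ⟨g3, -⟩⟩
      · exact absurd g2 hx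
      · exact absurd g2 hx
      · exact ⟨h1, Or.inr (Or.inr ⟨g1, hy, Or.inl g3⟩)⟩
      · exact absurd g3 (hpermne b h1)
    · rintro ⟨h1, h2⟩
      rcases h2 with ⟨-, g2, -⟩ | ⟨-, g2⟩ | ⟨g1, -, g3 | ⟨g3, -⟩⟩
      · exact absurd g2 hy
      · exact absurd g2 hy
      · exact ⟨h1, Or.inr (Or.inr ⟨g1, hx, Or.inl g3⟩)⟩
      · exact absurd g3 (hpermne b h1)
  -- color sum splittings
  have hcsπ : colsum π
      = (if π.col ⟨0, h⟩ ≠ 0 then (π.perm ⟨0, h⟩).val + (π.col ⟨0, h⟩).val else 0)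
        + ∑ k ∈ Finset.univ.erase ⟨0, h⟩,
            (if π.col k ≠ 0 then (π.perm k).val + (π.col k).val else 0) := by
    rw [colsum, ← Finset.add_sum_erase _ _ (Finset.mem_univ ⟨0, h⟩)]
  have hcsτ : colsum (π * s0 h)
      = (if π.col ⟨0, h⟩ + 1 ≠ 0 then (π.perm ⟨0, h⟩).val + (π.col ⟨0, h⟩ + 1).val else 0)
        + ∑ k ∈ Finset.univ.erase ⟨0, h⟩,
            (if π.col k ≠ 0 then (π.perm k).val + (π.col k).val else 0) := by
    rw [colsum, ← Finset.add_sum_erase _ _ (Finset.mem_univ ⟨0, h⟩)]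
    have hτcol : ∀ k, (π * s0 h).col k = π.col k + if k = ⟨0, h⟩ then 1 else 0 := by
      intro k
      show (if k = (⟨0, h⟩ : Fin n) then (1 : ZMod r) else 0)
          + π.col ((1 : Equiv.Perm (Fin n)) k) = _
      rw [Equiv.Perm.one_apply, add_comm]
    congr 1
    · rw [hτcol ⟨0, h⟩, if_pos rfl, hτperm]
    · apply Finset.sum_congr rfl
      intro k hk
      rw [hτcol k, if_neg (Finset.mem_erase.1 hk).1, add_zero, hτperm]
  constructor
  · intro hne
    by_cases hcz : π.col ⟨0, h⟩ = 0
    · -- c = 0, so c + 1 = 1 ≠ 0 and r > 1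
      rw [hcz, zero_add] at hne
      have hr2 : 1 < r := by
        have h0 : r ≠ 0 := NeZero.ne r
        have h1 : r ≠ 1 := by
          intro h1
          apply hne
          have : Subsingleton (ZMod r) := by rw [h1]; infer_instance
          exact Subsingleton.elim _ _
        omega
      haveI : Fact (1 < r) := ⟨hr2⟩
      rw [hcz] at hsplitπ
      rw [hkey 1 hne] at hsplitπ
      rw [hcz, zero_add] at hsplitτ
      rw [if_neg (not_not_intro hcz)] at hcsπ
      rw [hcz, zero_add] at hcsτ
      rw [if_pos hne, ZMod.val_one] at hcsτ
      simp only [stat]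
      rw [hsplitτ, hsplitπ, hcsτ, hcsπ]
      omega
    · -- c ≠ 0 and c + 1 ≠ 0
      have hr2 : 1 < r := by
        have h0 : r ≠ 0 := NeZero.ne r
        have h1 : r ≠ 1 := by
          intro h1
          apply hcz
          have : Subsingleton (ZMod r) := by rw [h1]; infer_instance
          exact Subsingleton.elim _ _
        omega
      haveI : Fact (1 < r) := ⟨hr2⟩
      have hcval : (π.col ⟨0, h⟩).val < r := ZMod.val_lt _
      have hadd : (π.col ⟨0, h⟩ + 1).val = ((π.col ⟨0, h⟩).val + 1) % r := by
        rw [ZMod.val_add, ZMod.val_one]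
      have hne' : (π.col ⟨0, h⟩ + 1).val ≠ 0 :=
        fun h0 => hne ((ZMod.val_eq_zero _).1 h0)
      have hcval1 : (π.col ⟨0, h⟩ + 1).val = (π.col ⟨0, h⟩).val + 1 := by
        rcases Nat.lt_or_ge ((π.col ⟨0, h⟩).val + 1) r with hlt | hge
        · rw [hadd, Nat.mod_eq_of_lt hlt]
        · exfalso
          apply hne'
          rw [hadd]
          have hcr : (π.col ⟨0, h⟩).val + 1 = r := by omega
          rw [hcr, Nat.mod_self]
      rw [if_pos hne, hcval1] at hcsτ
      rw [if_pos hcz] at hcsπ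
      rw [hkey2 (π.col ⟨0, h⟩ + 1) (π.col ⟨0, h⟩) hne hcz] at hsplitτ
      simp only [stat]
      rw [hsplitτ, hsplitπ, hcsτ, hcsπ]
      omega
  · intro heq
    by_cases hcz : π.col ⟨0, h⟩ = 0
    · -- r = 1 case: c + 1 = c
      have hc1 : π.col ⟨0, h⟩ + 1 = π.col ⟨0, h⟩ := by rw [heq, hcz]
      rw [hc1] at hsplitτ hcsτ
      simp only [stat]
      rw [hsplitτ, hsplitπ, hcsτ, ← hcsπ]
    · have hcv : 1 ≤ (π.col ⟨0, h⟩).val :=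
        Nat.pos_of_ne_zero (fun h0 => hcz ((ZMod.val_eq_zero _).1 h0))
      rw [heq] at hsplitτ hcsτ
      rw [hkey _ hcz] at hsplitτ
      rw [if_neg (by simp)] at hcsτ
      rw [if_pos hcz] at hcsπ
      simp only [stat]
      rw [hsplitτ, hsplitπ, hcsτ, hcsπ]
      omega

theorem perm_window_ne (π : CPerm r n) {a b : Fin n} (hab : a ≠ b) :
    (window π a).1 ≠ (window π b).1 := by
  intro hc
  exact hab (π.perm.injective hc)

theorem stat_mul_swap (π : CPerm r n) (i : Fin n) (hj : i.val + 1 < n) :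
    (clt (window π ⟨i.val + 1, hj⟩) (window π i) →
        stat (π * ct i 0 ⟨i.val + 1, hj⟩) + 1 = stat π) ∧
    (¬ clt (window π ⟨i.val + 1, hj⟩) (window π i) →
        stat (π * ct i 0 ⟨i.val + 1, hj⟩) = stat π + 1) := by
  set j : Fin n := ⟨i.val + 1, hj⟩ with hjdef
  have hjv : j.val = i.val + 1 := rfl
  have hij : i < j := Fin.lt_def.2 (by omega)
  have hijne : i ≠ j := ne_of_lt hij
  -- colsum is preserved
  have hcs : colsum (π * ct i 0 j) = colsum π := by
    have hh : ∀ ρ : CPerm r n, colsum ρ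
        = ∑ k : Fin n, (fun x : Fin n × ZMod r =>
            if x.2 ≠ 0 then x.1.val + x.2.val else 0) (window ρ k) := fun ρ => rfl
    rw [hh, hh]
    simp only [window_mul_ct0]
    exact Equiv.sum_comp (Equiv.swap i j) (fun k =>
      (fun x : Fin n × ZMod r => if x.2 ≠ 0 then x.1.val + x.2.val else 0) (window π k))
  -- order preservation of the adjacent swap away from (i,j)
  have hord : ∀ a b : Fin n, a < b → (a, b) ≠ ((i, j) : Fin n × Fin n) →
      Equiv.swap i j a < Equiv.swap i j b := by
    intro a b hab hne
    have hne' : a.val ≠ i.val ∨ b.val ≠ j.val := by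
      by_contra hc
      push_neg at hc
      exact hne (Prod.ext (Fin.ext hc.1) (Fin.ext hc.2))
    rw [Fin.lt_def] at hab
    rw [Fin.lt_def]
    simp only [Equiv.swap_apply_def, Fin.ext_iff, apply_ite Fin.val]
    split_ifs <;> omega
  have hmemτ : ∀ p : Fin n × Fin n, p ∈ invF (π * ct i 0 j) ↔
      (p.1 < p.2 ∧ clt (window π (Equiv.swap i j p.2)) (window π (Equiv.swap i j p.1))) := by
    intro p
    simp only [invF, Finset.mem_filter, Finset.mem_univ, true_and, window_mul_ct0]
  have hmemπ : ∀ p : Fin n × Fin n, p ∈ invF π ↔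
      (p.1 < p.2 ∧ clt (window π p.2) (window π p.1)) := by
    intro p
    simp only [invF, Finset.mem_filter, Finset.mem_univ, true_and]
  -- the eras{ed} sets have equal cardinality
  have hcard : ((invF (π * ct i 0 j)).erase (i, j)).card
      = ((invF π).erase (i, j)).card := by
    apply Finset.card_bij' (fun p _ => (Equiv.swap i j p.1, Equiv.swap i j p.2))
      (fun p _ => (Equiv.swap i j p.1, Equiv.swap i j p.2))
    · intro p hp
      obtain ⟨hpne, hpm⟩ := Finset.mem_erase.1 hp
      rw [hmemτ] at hpm
      refine Finset.mem_erase.2 ⟨?_, ?_⟩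
      · intro hc
        have h1 : p.1 = j := by
          have := congrArg Prod.fst hc
          simp only at this
          have := congrArg (Equiv.swap i j) this
          rwa [Equiv.swap_apply_self, Equiv.swap_apply_left] at this
        have h2 : p.2 = i := by
          have := congrArg Prod.snd hc
          simp only at this
          have := congrArg (Equiv.swap i j) this
          rwa [Equiv.swap_apply_self, Equiv.swap_apply_right] at this
        rw [h1, h2] at hpm
        exact absurd (lt_trans hij hpm.1) (lt_irrefl _)
      · rw [hmemπ]
        exact ⟨hord _ _ hpm.1 hpne, hpm.2⟩
    · intro p hp
      obtain ⟨hpne, hpm⟩ := Finset.mem_erase.1 hp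
      rw [hmemπ] at hpm
      refine Finset.mem_erase.2 ⟨?_, ?_⟩
      · intro hc
        have h1 : p.1 = j := by
          have := congrArg Prod.fst hc
          simp only at this
          have := congrArg (Equiv.swap i j) this
          rwa [Equiv.swap_apply_self, Equiv.swap_apply_left] at this
        have h2 : p.2 = i := by
          have := congrArg Prod.snd hc
          simp only at this
          have := congrArg (Equiv.swap i j) this
          rwa [Equiv.swap_apply_self, Equiv.swap_apply_right] at this
        rw [h1, h2] at hpm
        exact absurd (lt_trans hij hpm.1) (lt_irrefl _)
      · rw [hmemτ]
        refine ⟨hord _ _ hpm.1 hpne, ?_⟩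
        rw [Equiv.swap_apply_self, Equiv.swap_apply_self]
        exact hpm.2
    · intro p _
      simp [Equiv.swap_apply_self]
    · intro p _
      simp [Equiv.swap_apply_self]
  have hijmemτ : ((i, j) : Fin n × Fin n) ∈ invF (π * ct i 0 j)
      ↔ clt (window π i) (window π j) := by
    rw [hmemτ]
    simp only [Equiv.swap_apply_left, Equiv.swap_apply_right]
    exact and_iff_right hij
  have hijmemπ : ((i, j) : Fin n × Fin n) ∈ invF π
      ↔ clt (window π j) (window π i) := by
    rw [hmemπ]
    exact and_iff_right hij
  constructor
  · intro hd
    have h1 : ((i, j) : Fin n × Fin n) ∈ invF π := hijmemπ.2 hd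
    have h2 : ((i, j) : Fin n × Fin n) ∉ invF (π * ct i 0 j) := by
      rw [hijmemτ]
      exact clt_asymm hd
    have e1 : (invF π).card = ((invF π).erase (i, j)).card + 1 :=
      (Finset.card_erase_add_one h1).symm
    have e2 : (invF (π * ct i 0 j)).card = ((invF (π * ct i 0 j)).erase (i, j)).card := by
      rw [Finset.erase_eq_of_notMem h2]
    simp only [stat]
    rw [e1, e2, hcard, hcs]
    ring
  · intro hd
    have hd' : clt (window π i) (window π j) := by
      rcases clt_total (perm_window_ne π hijne) with h' | h'
      · exact h'
      · exact absurd h' hd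
    have h1 : ((i, j) : Fin n × Fin n) ∈ invF (π * ct i 0 j) := hijmemτ.2 hd'
    have h2 : ((i, j) : Fin n × Fin n) ∉ invF π := by
      rw [hijmemπ]
      exact hd
    have e1 : (invF (π * ct i 0 j)).card = ((invF (π * ct i 0 j)).erase (i, j)).card + 1 :=
      (Finset.card_erase_add_one h1).symm
    have e2 : (invF π).card = ((invF π).erase (i, j)).card := by
      rw [Finset.erase_eq_of_notMem h2]
    simp only [stat]
    rw [e1, e2, hcard, hcs]
    ring

theorem stat_mul_le [NeZero r] (π g : CPerm r n) (hg : g ∈ gens) :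
    stat (π * g) ≤ stat π + 1 := by
  rcases hg with ⟨h, rfl⟩ | ⟨i, hj, rfl⟩
  · rcases eq_or_ne (π.col ⟨0, h⟩ + 1) 0 with he | hne
    · exact le_trans ((stat_mul_s0 π h).2 he) (Nat.le_succ _)
    · exact le_of_eq ((stat_mul_s0 π h).1 hne)
  · by_cases hd : clt (window π ⟨i.val + 1, hj⟩) (window π i)
    · have := (stat_mul_swap π i hj).1 hd
      omega
    · exact le_of_eq ((stat_mul_swap π i hj).2 hd)

theorem stat_prod_le [NeZero r] (l : List (CPerm r n)) (hl : ∀ g ∈ l, g ∈ gens) :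
    stat l.prod ≤ l.length := by
  induction l using List.reverseRecOn with
  | nil => simp [stat_one]
  | append_singleton l g ih =>
    rw [List.prod_append, List.prod_singleton, List.length_append]
    have h1 := stat_mul_le l.prod g (hl g (by simp))
    have h2 := ih (fun x hx => hl x (by simp [hx]))
    simp only [List.length_singleton]
    omega

theorem eq_one_of_no_descent (π : CPerm r n)
    (hcol : ∀ h : 0 < n, π.col ⟨0, h⟩ = 0)
    (hnd : ∀ (i : Fin n) (hj : i.val + 1 < n),
      ¬ clt (window π ⟨i.val + 1, hj⟩) (window π i)) :
    π = 1 := by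
  have hchain : ∀ (i : Fin n) (hj : i.val + 1 < n),
      clt (window π i) (window π ⟨i.val + 1, hj⟩) := by
    intro i hj
    have hne : i ≠ ⟨i.val + 1, hj⟩ := by
      intro hc
      have := congrArg Fin.val hc
      simp only at this
      omega
    rcases clt_total (perm_window_ne π hne) with h' | h'
    · exact h'
    · exact absurd h' (hnd i hj)
  have key : ∀ m (hm : m < n), π.col ⟨m, hm⟩ = 0 := by
    intro m
    induction m with
    | zero => exact fun hm => hcol hm
    | succ m ih =>
      intro hm
      have hm' : m < n := by omega
      have hc := hchain ⟨m, hm'⟩ hm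
      have h0 : π.col ⟨m, hm'⟩ = 0 := ih hm'
      rcases hc with ⟨-, h2, -⟩ | ⟨h1, -⟩ | ⟨h1, -⟩
      · exact h2
      · exact absurd h0 h1
      · exact absurd h0 h1
  have hmono : ∀ m (hm : m + 1 < n) (hm' : m < n),
      π.perm ⟨m, hm'⟩ < π.perm ⟨m + 1, hm⟩ := by
    intro m hm hm'
    rcases hchain ⟨m, hm'⟩ hm with ⟨-, -, h3⟩ | ⟨h1, -⟩ | ⟨h1, -⟩
    · exact h3
    · exact absurd (key m hm') h1
    · exact absurd (key m hm') h1
  have hle : ∀ (d a : ℕ) (ha : a + d < n),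
      π.perm ⟨a, by omega⟩ ≤ π.perm ⟨a + d, ha⟩ := by
    intro d
    induction d with
    | zero => exact fun a ha => le_refl _
    | succ d ih =>
      intro a ha
      exact le_trans (ih a (by omega)) (le_of_lt (hmono (a + d) ha (by omega)))
  have hsm : StrictMono π.perm := by
    intro a b hab
    rw [Fin.lt_def] at hab
    have hb : b = ⟨a.val + (b.val - a.val - 1) + 1, by omega⟩ := Fin.ext (by simp; omega)
    rw [hb]
    exact lt_of_le_of_lt (hle (b.val - a.val - 1) a.val (by omega))
      (hmono (a.val + (b.val - a.val - 1)) (by omega) (by omega))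
  have hgen : ∀ f : Fin n → Fin n, StrictMono f → ∀ k, k ≤ f k := by
    intro f hf k
    have hval : ∀ m (hm : m < n), m ≤ (f ⟨m, hm⟩).val := by
      intro m
      induction m with
      | zero => exact fun _ => Nat.zero_le _
      | succ m ih =>
        intro hm
        have hm' : m < n := by omega
        have h0 := ih hm'
        have hlt := hf (show (⟨m, hm'⟩ : Fin n) < ⟨m + 1, hm⟩ from
          Fin.lt_def.2 (Nat.lt_succ_self m))
        rw [Fin.lt_def] at hlt
        omega
    exact Fin.le_def.2 (hval k.val k.2)
  have h1 : ∀ k, k ≤ π.perm k := hgen π.perm hsm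
  have hinv : StrictMono (π.perm⁻¹ : Equiv.Perm (Fin n)) := by
    intro a b hab
    rcases lt_trichotomy (π.perm⁻¹ a) (π.perm⁻¹ b) with h | h | h
    · exact h
    · exact absurd (by rw [← π.perm.apply_inv_self a, ← π.perm.apply_inv_self b, h])
        (ne_of_lt hab)
    · have := hsm h
      rw [π.perm.apply_inv_self, π.perm.apply_inv_self] at this
      exact absurd hab (not_lt.2 (le_of_lt this))
  have h2 : ∀ k, π.perm k ≤ k := fun k => by
    have h3 := hgen _ hinv (π.perm k)
    rwa [π.perm.inv_apply_self] at h3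
  apply ext'
  · apply Equiv.ext
    intro k
    exact le_antisymm (h2 k) (h1 k)
  · funext k
    exact key k.val k.2

theorem descent [NeZero r] (π : CPerm r n) (hne : π ≠ 1) :
    ∃ (π' g : CPerm r n), g ∈ gens ∧ π = π' * g ∧ stat π = stat π' + 1 := by
  by_cases hd : ∃ (i : Fin n) (hj : i.val + 1 < n),
      clt (window π ⟨i.val + 1, hj⟩) (window π i)
  · obtain ⟨i, hj, hdes⟩ := hd
    refine ⟨π * ct i 0 ⟨i.val + 1, hj⟩, ct i 0 ⟨i.val + 1, hj⟩,
      Or.inr ⟨i, hj, rfl⟩, ?_, ((stat_mul_swap π i hj).1 hdes).symm⟩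
    have hs : ct i (0 : ZMod r) ⟨i.val + 1, hj⟩ * ct i 0 ⟨i.val + 1, hj⟩ = (1 : CPerm r n) := by
      apply ext'
      · show Equiv.swap _ _ * Equiv.swap _ _ = 1
        rw [Equiv.swap_mul_self]
      · have hcol0 : ∀ k, (ct i 0 ⟨i.val + 1, hj⟩ : CPerm r n).col k = 0 := by
          intro k
          simp [ct]
        funext k
        rw [mul_col, hcol0, hcol0, add_zero]
        rfl
    rw [mul_assoc, hs, mul_one]
  · push_neg at hd
    have hc0 : ∃ h : 0 < n, π.col ⟨0, h⟩ ≠ 0 := by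
      by_contra hc
      push_neg at hc
      exact hne (eq_one_of_no_descent π hc hd)
    obtain ⟨h, hc⟩ := hc0
    have hfac : π = (π * (s0 h)⁻¹) * s0 h := by
      rw [mul_assoc, inv_mul_cancel, mul_one]
    have hcol' : (π * (s0 h)⁻¹).col ⟨0, h⟩ + 1 = π.col ⟨0, h⟩ := by
      show ((s0 h)⁻¹.col ⟨0, h⟩ + π.col ((s0 h)⁻¹.perm ⟨0, h⟩)) + 1 = _
      rw [inv_col, inv_perm]
      have hp : (s0 h : CPerm r n).perm = 1 := rfl
      rw [hp, inv_one, Equiv.Perm.one_apply]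
      show (-(if (⟨0, h⟩ : Fin n) = ⟨0, h⟩ then (1:ZMod r) else 0) + π.col ⟨0, h⟩) + 1 = _
      rw [if_pos rfl]
      ring
    refine ⟨π * (s0 h)⁻¹, s0 h, Or.inl ⟨h, rfl⟩, hfac, ?_⟩
    have hst := (stat_mul_s0 (π * (s0 h)⁻¹) h).1 (by rw [hcol']; exact hc)
    rw [← hfac] at hst
    exact hst

theorem exists_word [NeZero r] (π : CPerm r n) :
    ∃ l : List (CPerm r n), (∀ g ∈ l, g ∈ gens) ∧ l.prod = π ∧ l.length = stat π := by
  generalize hs : stat π = m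
  induction m generalizing π with
  | zero =>
    have hπ : π = 1 := by
      by_contra hne
      obtain ⟨π', g, -, -, hstat⟩ := descent π hne
      omega
    exact ⟨[], by simp, by rw [List.prod_nil, hπ], rfl⟩
  | succ m ih =>
    have hne : π ≠ 1 := by
      rintro rfl
      rw [stat_one] at hs
      omega
    obtain ⟨π', g, hg, hfac, hstat⟩ := descent π hne
    obtain ⟨l, hl1, hl2, hl3⟩ := ih π' (by omega)
    refine ⟨l ++ [g], ?_, ?_, ?_⟩
    · intro x hx
      rcases List.mem_append.1 hx with hx | hx
      · exact hl1 x hx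
      · rw [List.mem_singleton.1 hx]
        exact hg
    · rw [List.prod_append, List.prod_singleton, hl2, ← hfac]
    · simp [hl3]

theorem len_eq_stat [NeZero r] (π : CPerm r n) : len π = stat π := by
  obtain ⟨l, hl1, hl2, hl3⟩ := exists_word π
  have hSdef : len π
      = sInf {k | ∃ l : List (CPerm r n), l.length = k ∧ (∀ g ∈ l, g ∈ gens) ∧ l.prod = π} :=
    rfl
  apply le_antisymm
  · rw [hSdef]
    exact Nat.sInf_le ⟨l, hl3, hl1, hl2⟩
  · have hne : {k | ∃ l : List (CPerm r n),
        l.length = k ∧ (∀ g ∈ l, g ∈ gens) ∧ l.prod = π}.Nonempty :=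
      ⟨stat π, l, hl3, hl1, hl2⟩
    obtain ⟨l', hl'1, hl'2, hl'3⟩ := Nat.sInf_mem hne
    rw [hSdef]
    calc stat π = stat l'.prod := by rw [hl'3]
    _ ≤ l'.length := stat_prod_le l' hl'2
    _ = _ := hl'1

/-- The weight of a code slot. -/
def slotWt (r i : ℕ) : (Fin (i + 1) ⊕ Fin (i + 1) × Fin (r - 1)) → ℕ
  | Sum.inl p => i - p.val
  | Sum.inr pz => pz.1.val + i + 1 + pz.2.val

/-- The 0-based rank of the value `v` among the letters with base value `< v`
appearing to the left of it. -/
def rk (π : CPerm r n) (v : Fin n) : ℕ :=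
  (Finset.univ.filter fun b => b < π.perm⁻¹ v ∧ π.perm b < v).card

theorem rk_le (π : CPerm r n) (v : Fin n) : rk π v ≤ v.val := by
  rw [rk, ← card_filter_perm_lt π v]
  apply Finset.card_le_card
  intro b hb
  simp only [Finset.mem_filter, Finset.mem_univ, true_and] at hb ⊢
  exact hb.2

/-- The code of a colored permutation. -/
def encode [NeZero r] (π : CPerm r n) (v : Fin n) :
    Fin (v.val + 1) ⊕ Fin (v.val + 1) × Fin (r - 1) :=
  if hz : π.col (π.perm⁻¹ v) = 0 then
    Sum.inl ⟨rk π v, Nat.lt_succ_of_le (rk_le π v)⟩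
  else
    Sum.inr (⟨rk π v, Nat.lt_succ_of_le (rk_le π v)⟩,
      ⟨(π.col (π.perm⁻¹ v)).val - 1, by
        have h1 := ZMod.val_lt (π.col (π.perm⁻¹ v))
        have h2 : (π.col (π.perm⁻¹ v)).val ≠ 0 :=
          fun h0 => hz ((ZMod.val_eq_zero _).1 h0)
        omega⟩)

/-- Observation functions determining a slot. -/
def obsRk {r i : ℕ} : (Fin (i + 1) ⊕ Fin (i + 1) × Fin (r - 1)) → ℕ
  | Sum.inl p => p.val
  | Sum.inr pz => pz.1.val

def obsCol {r i : ℕ} : (Fin (i + 1) ⊕ Fin (i + 1) × Fin (r - 1)) → ℕ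
  | Sum.inl _ => 0
  | Sum.inr pz => pz.2.val + 1

theorem slot_ext {r i : ℕ} (x y : Fin (i + 1) ⊕ Fin (i + 1) × Fin (r - 1))
    (h1 : obsRk x = obsRk y) (h2 : obsCol x = obsCol y) : x = y := by
  rcases x with p | ⟨p, z⟩ <;> rcases y with q | ⟨q, w⟩
  · simp only [obsRk] at h1
    rw [Fin.ext h1]
  · simp only [obsCol] at h2
    omega
  · simp only [obsCol] at h2
    omega
  · simp only [obsRk, obsCol] at h1 h2
    rw [Fin.ext h1, Fin.ext (by omega : z.val = w.val)]

theorem encode_obsRk [NeZero r] (π : CPerm r n) (v : Fin n) :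
    obsRk (encode π v) = rk π v := by
  rw [encode]
  split <;> rfl

theorem encode_obsCol [NeZero r] (π : CPerm r n) (v : Fin n) :
    obsCol (encode π v) = (π.col (π.perm⁻¹ v)).val := by
  rw [encode]
  split
  · rename_i hz
    rw [hz, ZMod.val_zero]
    rfl
  · rename_i hz
    show (π.col (π.perm⁻¹ v)).val - 1 + 1 = _
    have h2 : (π.col (π.perm⁻¹ v)).val ≠ 0 :=
      fun h0 => hz ((ZMod.val_eq_zero _).1 h0)
    omega

theorem colsum_eq (π : CPerm r n) :
    colsum π = ∑ v : Fin n,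
      (if π.col (π.perm⁻¹ v) = 0 then 0
        else v.val + (π.col (π.perm⁻¹ v)).val) := by
  calc colsum π
      = ∑ i : Fin n, (fun i => if π.col i ≠ 0 then (π.perm i).val + (π.col i).val else 0) i :=
        rfl
    _ = ∑ v : Fin n, (fun i => if π.col i ≠ 0 then (π.perm i).val + (π.col i).val else 0)
          (π.perm⁻¹ v) :=
        (Equiv.sum_comp (π.perm⁻¹ : Equiv.Perm (Fin n)) _).symm
    _ = _ := by
        apply Finset.sum_congr rfl
        intro v _
        simp only [π.perm.apply_inv_self, Ne, ite_not]

theorem invF_card_eq (π : CPerm r n) :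
    (invF π).card = ∑ v : Fin n,
      (if π.col (π.perm⁻¹ v) = 0 then v.val - rk π v else rk π v) := by
  rw [Finset.card_eq_sum_card_fiberwise
    (f := fun p : Fin n × Fin n => max (π.perm p.1) (π.perm p.2))
    (t := Finset.univ) (fun x _ => Finset.mem_univ _)]
  apply Finset.sum_congr rfl
  intro v _
  have hwpv : window π (π.perm⁻¹ v) = (v, π.col (π.perm⁻¹ v)) := by
    rw [window_def, π.perm.apply_inv_self]
  by_cases hz : π.col (π.perm⁻¹ v) = 0
  · rw [if_pos hz]
    rw [hz] at hwpv
    have hA : ∀ b : Fin n, π.perm b < v → clt (window π b) (v, (0 : ZMod r)) := by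
      intro b hb
      by_cases hcb : π.col b = 0
      · exact Or.inl ⟨hcb, rfl, hb⟩
      · exact Or.inr (Or.inl ⟨hcb, rfl⟩)
    have himg : (invF π).filter (fun p => max (π.perm p.1) (π.perm p.2) = v)
        = (Finset.univ.filter fun b => π.perm⁻¹ v < b ∧ π.perm b < v).image
            (fun b => (π.perm⁻¹ v, b)) := by
      ext p
      simp only [Finset.mem_filter, Finset.mem_image, Finset.mem_univ, true_and, invF]
      constructor
      · rintro ⟨⟨h1, h2⟩, h3⟩
        have hle1 : π.perm p.1 ≤ v := h3 ▸ le_max_left _ _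
        have hle2 : π.perm p.2 ≤ v := h3 ▸ le_max_right _ _
        have heq : π.perm p.1 = v ∨ π.perm p.2 = v := by
          rcases max_choice (π.perm p.1) (π.perm p.2) with hh | hh
          · exact Or.inl (by rw [← h3, hh])
          · exact Or.inr (by rw [← h3, hh])
        rcases heq with he | he
        · have hp1 : p.1 = π.perm⁻¹ v := by
            rw [← he, π.perm.inv_apply_self]
          have hne : π.perm p.2 ≠ v := fun hc =>
            absurd (π.perm.injective (hc.trans he.symm)) (ne_of_gt h1)
          refine ⟨p.2, ⟨hp1 ▸ h1, lt_of_le_of_ne hle2 hne⟩, ?_⟩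
          rw [← hp1]
        · exfalso
          have hp2 : p.2 = π.perm⁻¹ v := by
            rw [← he, π.perm.inv_apply_self]
          have hne : π.perm p.1 ≠ v := fun hc =>
            absurd (π.perm.injective (hc.trans he.symm)) (ne_of_lt h1)
          have hwp2 : window π p.2 = (v, (0 : ZMod r)) := by
            rw [hp2, hwpv]
          rw [hwp2] at h2
          exact clt_asymm (hA p.1 (lt_of_le_of_ne hle1 hne)) h2
      · rintro ⟨b, ⟨hb1, hb2⟩, rfl⟩
        refine ⟨⟨hb1, ?_⟩, ?_⟩
        · rw [hwpv]
          exact hA b hb2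
        · show max (π.perm (π.perm⁻¹ v)) (π.perm b) = v
          rw [π.perm.apply_inv_self]
          exact max_eq_left (le_of_lt hb2)
    rw [himg, Finset.card_image_of_injective _
      (fun a b hab => (Prod.ext_iff.1 hab).2)]
    have hpart : rk π v
        + (Finset.univ.filter fun b => π.perm⁻¹ v < b ∧ π.perm b < v).card
        = v.val := by
      rw [rk, ← card_filter_perm_lt π v, ← Finset.card_union_of_disjoint]
      · congr 1
        ext b
        simp only [Finset.mem_union, Finset.mem_filter, Finset.mem_univ, true_and]
        constructor
        · rintro (⟨h1, h2⟩ | ⟨h1, h2⟩) <;> exact h2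
        · intro hb
          have hne : b ≠ π.perm⁻¹ v := by
            intro hc
            rw [hc, π.perm.apply_inv_self] at hb
            exact lt_irrefl _ hb
          rcases lt_or_gt_of_ne hne with h' | h'
          · exact Or.inl ⟨h', hb⟩
          · exact Or.inr ⟨h', hb⟩
      · rw [Finset.disjoint_left]
        intro b hb1 hb2
        simp only [Finset.mem_filter, Finset.mem_univ, true_and] at hb1 hb2
        exact absurd hb2.1 (not_lt.2 (le_of_lt hb1.1))
    omega
  · rw [if_neg hz]
    have hA : ∀ b : Fin n, π.perm b < v →
        clt (v, π.col (π.perm⁻¹ v)) (window π b) := by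
      intro b hb
      by_cases hcb : π.col b = 0
      · exact Or.inr (Or.inl ⟨hz, hcb⟩)
      · exact Or.inr (Or.inr ⟨hz, hcb, Or.inl hb⟩)
    have himg : (invF π).filter (fun p => max (π.perm p.1) (π.perm p.2) = v)
        = (Finset.univ.filter fun b => b < π.perm⁻¹ v ∧ π.perm b < v).image
            (fun b => (b, π.perm⁻¹ v)) := by
      ext p
      simp only [Finset.mem_filter, Finset.mem_image, Finset.mem_univ, true_and, invF]
      constructor
      · rintro ⟨⟨h1, h2⟩, h3⟩
        have hle1 : π.perm p.1 ≤ v := h3 ▸ le_max_left _ _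
        have hle2 : π.perm p.2 ≤ v := h3 ▸ le_max_right _ _
        have heq : π.perm p.1 = v ∨ π.perm p.2 = v := by
          rcases max_choice (π.perm p.1) (π.perm p.2) with hh | hh
          · exact Or.inl (by rw [← h3, hh])
          · exact Or.inr (by rw [← h3, hh])
        rcases heq with he | he
        · exfalso
          have hp1 : p.1 = π.perm⁻¹ v := by
            rw [← he, π.perm.inv_apply_self]
          have hne : π.perm p.2 ≠ v := fun hc =>
            absurd (π.perm.injective (hc.trans he.symm)) (ne_of_gt h1)
          have hwp1 : window π p.1 = (v, π.col (π.perm⁻¹ v)) := by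
            rw [hp1, hwpv]
          rw [hwp1] at h2
          exact clt_asymm (hA p.2 (lt_of_le_of_ne hle2 hne)) h2
        · have hp2 : p.2 = π.perm⁻¹ v := by
            rw [← he, π.perm.inv_apply_self]
          have hne : π.perm p.1 ≠ v := fun hc =>
            absurd (π.perm.injective (hc.trans he.symm)) (ne_of_lt h1)
          refine ⟨p.1, ⟨hp2 ▸ h1, lt_of_le_of_ne hle1 hne⟩, ?_⟩
          rw [← hp2]
      · rintro ⟨b, ⟨hb1, hb2⟩, rfl⟩
        refine ⟨⟨hb1, ?_⟩, ?_⟩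
        · rw [hwpv]
          exact hA b hb2
        · show max (π.perm b) (π.perm (π.perm⁻¹ v)) = v
          rw [π.perm.apply_inv_self]
          exact max_eq_right (le_of_lt hb2)
    rw [himg, Finset.card_image_of_injective _
      (fun a b hab => (Prod.ext_iff.1 hab).1)]
    rfl

theorem stat_eq_sum [NeZero r] (π : CPerm r n) :
    stat π = ∑ v : Fin n, slotWt r v.val (encode π v) := by
  rw [stat, invF_card_eq, colsum_eq, ← Finset.sum_add_distrib]
  apply Finset.sum_congr rfl
  intro v _
  by_cases hz : π.col (π.perm⁻¹ v) = 0
  · rw [if_pos hz, if_pos hz, add_zero]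
    simp only [encode, dif_pos hz, slotWt]
  · rw [if_neg hz, if_neg hz]
    simp only [encode, dif_neg hz, slotWt]
    have h2 : (π.col (π.perm⁻¹ v)).val ≠ 0 :=
      fun h0 => hz ((ZMod.val_eq_zero _).1 h0)
    omega

theorem encode_injective [NeZero r] :
    Function.Injective (encode : CPerm r n → ∀ v : Fin n, _) := by
  intro π π' henc
  have hrk : ∀ v, rk π v = rk π' v := fun v => by
    rw [← encode_obsRk π v, ← encode_obsRk π' v, congrFun henc v]
  have hcolv : ∀ v, (π.col (π.perm⁻¹ v)).val = (π'.col (π'.perm⁻¹ v)).val := fun v => by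
    rw [← encode_obsCol π v, ← encode_obsCol π' v, congrFun henc v]
  have hpos : ∀ k (v : Fin n), n - v.val ≤ k → π.perm⁻¹ v = π'.perm⁻¹ v := by
    intro k
    induction k with
    | zero =>
      intro v hv
      have := v.isLt
      omega
    | succ k ih =>
      intro v hv
      have hIH : ∀ w : Fin n, v < w → π.perm⁻¹ w = π'.perm⁻¹ w := by
        intro w hw
        apply ih
        rw [Fin.lt_def] at hw
        omega
      have hP : ∀ b, v < π.perm b ↔ v < π'.perm b := by
        intro b
        constructor
        · intro hb
          have h1 := hIH (π.perm b) hb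
          rw [π.perm.inv_apply_self] at h1
          have h2 : π'.perm b = π.perm b := by
            conv_lhs => rw [h1]
            rw [π'.perm.apply_inv_self]
          rw [h2]
          exact hb
        · intro hb
          have h1 := hIH (π'.perm b) hb
          rw [π'.perm.inv_apply_self] at h1
          have h2 : π.perm b = π'.perm b := by
            conv_lhs => rw [← h1]
            rw [π.perm.apply_inv_self]
          rw [h2]
          exact hb
      have hcond : ∀ (ρ : CPerm r n) (b : Fin n), b ≠ ρ.perm⁻¹ v →
          (ρ.perm b < v ↔ ¬ v < ρ.perm b) := by
        intro ρ b hb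
        constructor
        · exact fun h1 => not_lt.2 (le_of_lt h1)
        · intro h1
          refine lt_of_le_of_ne (not_lt.1 h1) ?_
          intro hc
          apply hb
          rw [← hc, ρ.perm.inv_apply_self]
      have hrkπ : rk π v
          = (Finset.univ.filter fun b => b < π.perm⁻¹ v ∧ ¬ v < π.perm b).card := by
        rw [rk]
        congr 1
        ext b
        simp only [Finset.mem_filter, Finset.mem_univ, true_and]
        constructor
        · rintro ⟨h1, h2⟩
          exact ⟨h1, (hcond π b (ne_of_lt h1)).1 h2⟩
        · rintro ⟨h1, h2⟩
          exact ⟨h1, (hcond π b (ne_of_lt h1)).2 h2⟩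
      have hrkπ' : rk π' v
          = (Finset.univ.filter fun b => b < π'.perm⁻¹ v ∧ ¬ v < π.perm b).card := by
        rw [rk]
        congr 1
        ext b
        simp only [Finset.mem_filter, Finset.mem_univ, true_and]
        constructor
        · rintro ⟨h1, h2⟩
          refine ⟨h1, ?_⟩
          rw [hP b]
          exact (hcond π' b (ne_of_lt h1)).1 h2
        · rintro ⟨h1, h2⟩
          rw [hP b] at h2
          exact ⟨h1, (hcond π' b (ne_of_lt h1)).2 h2⟩
      have hnotv : ∀ ρ : CPerm r n, (∀ b, v < ρ.perm b ↔ v < π.perm b) →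
          ¬ v < π.perm (ρ.perm⁻¹ v) := by
        intro ρ hρ
        rw [← hρ, ρ.perm.apply_inv_self]
        exact lt_irrefl _
      by_contra hne
      rcases lt_or_gt_of_ne hne with hlt | hlt
      · have hss : (Finset.univ.filter fun b => b < π.perm⁻¹ v ∧ ¬ v < π.perm b)
            ⊂ (Finset.univ.filter fun b => b < π'.perm⁻¹ v ∧ ¬ v < π.perm b) := by
          constructor
          · intro b hb
            simp only [Finset.mem_filter, Finset.mem_univ, true_and] at hb ⊢
            exact ⟨lt_trans hb.1 hlt, hb.2⟩
          · intro hsub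
            have hmem : π.perm⁻¹ v
                ∈ Finset.univ.filter fun b => b < π'.perm⁻¹ v ∧ ¬ v < π.perm b := by
              simp only [Finset.mem_filter, Finset.mem_univ, true_and]
              exact ⟨hlt, hnotv π (fun b => Iff.rfl)⟩
            have := hsub hmem
            simp only [Finset.mem_filter, Finset.mem_univ, true_and] at this
            exact lt_irrefl _ this.1
        have hc := Finset.card_lt_card hss
        rw [← hrkπ, ← hrkπ', hrk v] at hc
        exact lt_irrefl _ hc
      · have hss : (Finset.univ.filter fun b => b < π'.perm⁻¹ v ∧ ¬ v < π.perm b)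
            ⊂ (Finset.univ.filter fun b => b < π.perm⁻¹ v ∧ ¬ v < π.perm b) := by
          constructor
          · intro b hb
            simp only [Finset.mem_filter, Finset.mem_univ, true_and] at hb ⊢
            exact ⟨lt_trans hb.1 hlt, hb.2⟩
          · intro hsub
            have hmem : π'.perm⁻¹ v
                ∈ Finset.univ.filter fun b => b < π.perm⁻¹ v ∧ ¬ v < π.perm b := by
              simp only [Finset.mem_filter, Finset.mem_univ, true_and]
              exact ⟨hlt, hnotv π' (fun b => (hP b).symm)⟩
            have := hsub hmem
            simp only [Finset.mem_filter, Finset.mem_univ, true_and] at this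
            exact lt_irrefl _ this.1
        have hc := Finset.card_lt_card hss
        rw [← hrkπ, ← hrkπ', hrk v] at hc
        exact lt_irrefl _ hc
  have hinv : π.perm⁻¹ = π'.perm⁻¹ :=
    Equiv.ext (fun v => hpos n v (by omega))
  have hperm : π.perm = π'.perm := by
    rw [← inv_inv π.perm, hinv, inv_inv]
  apply ext' hperm
  funext b
  have hv := hcolv (π.perm b)
  rw [π.perm.inv_apply_self, hperm, π'.perm.inv_apply_self] at hv
  exact ZMod.val_injective r hv

theorem cperm_card [NeZero r] :
    Fintype.card (CPerm r n)
      = Fintype.card (∀ v : Fin n, Fin (v.val + 1) ⊕ Fin (v.val + 1) × Fin (r - 1)) := by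
  have e : CPerm r n ≃ Equiv.Perm (Fin n) × (Fin n → ZMod r) :=
    { toFun := fun g => (g.perm, g.col)
      invFun := fun p => ⟨p.1, p.2⟩
      left_inv := fun _ => rfl
      right_inv := fun _ => rfl }
  rw [Fintype.card_congr e, Fintype.card_prod, Fintype.card_perm, Fintype.card_fun,
    ZMod.card, Fintype.card_fin, Fintype.card_pi]
  have hfac : ∀ v : Fin n,
      Fintype.card (Fin (v.val + 1) ⊕ Fin (v.val + 1) × Fin (r - 1))
        = (v.val + 1) * r := by
    intro v
    rw [Fintype.card_sum, Fintype.card_prod, Fintype.card_fin, Fintype.card_fin]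
    have h0 := NeZero.ne r
    cases r with
    | zero => exact absurd rfl h0
    | succ m =>
      simp only [Nat.add_sub_cancel]
      ring
  rw [Finset.prod_congr rfl (fun v _ => hfac v), Finset.prod_mul_distrib,
    Finset.prod_const, Finset.card_univ, Fintype.card_fin]
  congr 1
  rw [Fin.prod_univ_eq_prod_range (fun i => i + 1), Finset.prod_range_add_one_eq_factorial]

theorem encode_bijective [NeZero r] :
    Function.Bijective (encode : CPerm r n → ∀ v : Fin n, _) :=
  (Fintype.bijective_iff_injective_and_card _).2 ⟨encode_injective, cperm_card⟩

end CPerm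

open CPerm in
/-- The distribution of the length function over `G_{r,n}`:
`Σ_π q^{ℓ(π)} = [n]_q! · ∏_{i=1}^n (1 + q^i [r-1]_q)`. -/
theorem length_generating_function (r n : ℕ) [NeZero r]
    (R : Type*) [CommRing R] (q : R) :
    ∑ π : CPerm r n, q ^ len π =
      (∏ i ∈ Finset.range n, ∑ j ∈ Finset.range (i + 1), q ^ j) *
        ∏ i ∈ Finset.range n, (1 + q ^ (i + 1) * ∑ j ∈ Finset.range (r - 1), q ^ j) := by
  have step1 : ∑ π : CPerm r n, q ^ len π
      = ∑ c : (∀ v : Fin n, Fin (v.val + 1) ⊕ Fin (v.val + 1) × Fin (r - 1)),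
          ∏ v : Fin n, q ^ slotWt r v.val (c v) := by
    refine Fintype.sum_bijective _ encode_bijective _ _ (fun π => ?_)
    rw [len_eq_stat, stat_eq_sum]
    exact (Finset.prod_pow_eq_pow_sum _ _ _).symm
  rw [step1]
  have step2 : (∑ c : (∀ v : Fin n, Fin (v.val + 1) ⊕ Fin (v.val + 1) × Fin (r - 1)),
          ∏ v : Fin n, q ^ slotWt r v.val (c v))
      = ∏ v : Fin n, ∑ s : Fin (v.val + 1) ⊕ Fin (v.val + 1) × Fin (r - 1),
          q ^ slotWt r v.val s := by
    have h := Finset.prod_univ_sum (fun v : Fin n =>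
      (Finset.univ : Finset (Fin (v.val + 1) ⊕ Fin (v.val + 1) × Fin (r - 1))))
      (fun v s => q ^ slotWt r v.val s)
    rw [Fintype.piFinset_univ] at h
    exact h.symm
  rw [step2]
  have step3 : ∀ v : Fin n,
      (∑ s : Fin (v.val + 1) ⊕ Fin (v.val + 1) × Fin (r - 1), q ^ slotWt r v.val s)
        = (∑ j ∈ Finset.range (v.val + 1), q ^ j)
          * (1 + q ^ (v.val + 1) * ∑ j ∈ Finset.range (r - 1), q ^ j) := by
    intro v
    rw [Fintype.sum_sum_type]
    have hA : (∑ p : Fin (v.val + 1), q ^ slotWt r v.val (Sum.inl p))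
        = ∑ j ∈ Finset.range (v.val + 1), q ^ j := by
      simp only [slotWt]
      rw [Fin.sum_univ_eq_sum_range (fun p => q ^ (v.val - p)) (v.val + 1)]
      calc ∑ j ∈ Finset.range (v.val + 1), q ^ (v.val - j)
          = ∑ j ∈ Finset.range (v.val + 1), q ^ (v.val + 1 - 1 - j) := by
            apply Finset.sum_congr rfl
            intro j hj
            simp only [Finset.mem_range] at hj
            have he : v.val - j = v.val + 1 - 1 - j := by omega
            rw [he]
        _ = ∑ j ∈ Finset.range (v.val + 1), q ^ j :=
            Finset.sum_range_reflect (fun j => q ^ j) (v.val + 1)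
    have hB : (∑ pz : Fin (v.val + 1) × Fin (r - 1), q ^ slotWt r v.val (Sum.inr pz))
        = (∑ j ∈ Finset.range (v.val + 1), q ^ j)
          * (q ^ (v.val + 1) * ∑ j ∈ Finset.range (r - 1), q ^ j) := by
      simp only [slotWt]
      rw [Fintype.sum_prod_type]
      calc ∑ p : Fin (v.val + 1), ∑ z : Fin (r - 1), q ^ (p.val + v.val + 1 + z.val)
          = ∑ p : Fin (v.val + 1), ∑ z : Fin (r - 1),
              q ^ p.val * (q ^ (v.val + 1) * q ^ z.val) := by
            apply Finset.sum_congr rfl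
            intro p _
            apply Finset.sum_congr rfl
            intro z _
            rw [← pow_add, ← pow_add]
            congr 1
            omega
        _ = ∑ p : Fin (v.val + 1), q ^ p.val * (q ^ (v.val + 1) * ∑ z : Fin (r - 1), q ^ z.val) := by
            apply Finset.sum_congr rfl
            intro p _
            rw [← Finset.mul_sum, ← Finset.mul_sum]
        _ = (∑ p : Fin (v.val + 1), q ^ p.val) * (q ^ (v.val + 1) * ∑ z : Fin (r - 1), q ^ z.val) := by
            rw [← Finset.sum_mul]
        _ = (∑ j ∈ Finset.range (v.val + 1), q ^ j)
            * (q ^ (v.val + 1) * ∑ j ∈ Finset.range (r - 1), q ^ j) := by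
            rw [Fin.sum_univ_eq_sum_range (fun j => q ^ j) (v.val + 1),
              Fin.sum_univ_eq_sum_range (fun j => q ^ j) (r - 1)]
    rw [hA, hB]
    ring
  rw [Finset.prod_congr rfl (fun v _ => step3 v), Finset.prod_mul_distrib]
  congr 1
  · exact Fin.prod_univ_eq_prod_range (fun i => ∑ j ∈ Finset.range (i + 1), q ^ j) n
  · exact Fin.prod_univ_eq_prod_range
      (fun i => 1 + q ^ (i + 1) * ∑ j ∈ Finset.range (r - 1), q ^ j) n
end
end

section
/- Every colored permutation π ∈ G_{r,n} can be written uniquely as a product π = (i_1^{[t_1]} j_1)(i_2^{[t_2]} j_2)⋯(i_k^{[t_k]} j_k) for some k, with 0 < j_1 < j_2 < ⋯ < j_k, where each factor is either a colored transposition (i^{[t]} j) with i < j, 0 ≤ t < r, or a coloring operation (j^{[t]} j) with 0 < t < r. -/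
noncomputable section
open scoped Classical

namespace CPerm

variable {r n : ℕ}

/-- `π` is trivial at position `k`. -/
def Triv (π : CPerm r n) (k : Fin n) : Prop := π.perm k = k ∧ π.col k = 0

lemma ct_perm_eq (i : Fin n) (t : ZMod r) (j : Fin n) :
    (ct i t j).perm = Equiv.swap i j := rfl

lemma ct_col_eq (i : Fin n) (t : ZMod r) (j k : Fin n) :
    (ct i t j).col k = if k = j then t else if k = i then -t else 0 := rfl

lemma prod_triv {l : List (Fin n × ZMod r × Fin n)} {k : Fin n}
    (h : ∀ x ∈ l, x.1 ≠ k ∧ x.2.2 ≠ k) :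
    Triv ((l.map fun x => ct x.1 x.2.1 x.2.2).prod) k := by
  induction l with
  | nil => exact ⟨rfl, rfl⟩
  | cons c l ih =>
    obtain ⟨hp, hc⟩ := ih fun x hx => h x (List.mem_cons_of_mem _ hx)
    obtain ⟨h1, h2⟩ := h c List.mem_cons_self
    constructor
    · show (ct c.1 c.2.1 c.2.2).perm (((l.map fun x => ct x.1 x.2.1 x.2.2).prod).perm k) = k
      rw [hp, ct_perm_eq, Equiv.swap_apply_of_ne_of_ne (Ne.symm h1) (Ne.symm h2)]
    · show ((l.map fun x => ct x.1 x.2.1 x.2.2).prod).col k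
        + (ct c.1 c.2.1 c.2.2).col (((l.map fun x => ct x.1 x.2.1 x.2.2).prod).perm k) = 0
      rw [hp, hc, ct_col_eq, if_neg (Ne.symm h2), if_neg (Ne.symm h1), add_zero]

lemma concat_main {π : CPerm r n} {l' : List (Fin n × ZMod r × Fin n)}
    {a : Fin n × ZMod r × Fin n} (h : IsSorFact π (l' ++ [a])) :
    IsSorFact ((l'.map fun x => ct x.1 x.2.1 x.2.2).prod) l' ∧
    π = ((l'.map fun x => ct x.1 x.2.1 x.2.2).prod) * ct a.1 a.2.1 a.2.2 ∧
    π.perm a.1 = a.2.2 ∧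
    ¬ Triv π a.2.2 ∧
    (∀ k, a.2.2 < k → Triv π k) ∧
    a.2.1 = (if a.1 = a.2.2 then π.col a.2.2 else - π.col a.1) ∧
    (∀ k, a.2.2 ≤ k → Triv ((l'.map fun x => ct x.1 x.2.1 x.2.2).prod) k) := by
  obtain ⟨hcond, hsort, hprod⟩ := h
  simp only [List.map_append] at hsort hprod
  rw [List.prod_append, List.map_singleton, List.prod_singleton] at hprod
  rw [List.map_singleton] at hsort
  rw [List.pairwise_append] at hsort
  obtain ⟨hs1, -, hlt⟩ := hsort
  set π' : CPerm r n := (l'.map fun x => ct x.1 x.2.1 x.2.2).prod with hπ'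
  have hmemlt : ∀ x ∈ l', x.2.2 < a.2.2 := by
    intro x hx
    exact hlt _ (List.mem_map_of_mem hx) _ (List.mem_singleton_self _)
  have hle : ∀ x ∈ l' ++ [a], x.1 ≤ x.2.2 := by
    intro x hx
    rcases hcond x hx with h | ⟨h, -⟩
    · exact le_of_lt h
    · exact le_of_eq h
  have hT : ∀ k, a.2.2 ≤ k → Triv π' k := by
    intro k hk
    apply prod_triv
    intro x hx
    have h2 : x.2.2 < k := lt_of_lt_of_le (hmemlt x hx) hk
    exact ⟨ne_of_lt (lt_of_le_of_lt (hle x (List.mem_append_left _ hx)) h2), ne_of_lt h2⟩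
  have ha1 : a.1 ≤ a.2.2 := hle a (List.mem_append_right _ (List.mem_singleton_self _))
  have hπ : π = π' * ct a.1 a.2.1 a.2.2 := hprod.symm
  have hpermi : π.perm a.1 = a.2.2 := by
    rw [hπ]
    show π'.perm ((ct a.1 a.2.1 a.2.2).perm a.1) = a.2.2
    rw [ct_perm_eq, Equiv.swap_apply_left]
    exact (hT a.2.2 le_rfl).1
  have hcola : a.1 = a.2.2 → π.col a.2.2 = a.2.1 := by
    intro he
    rw [hπ]
    show (ct a.1 a.2.1 a.2.2).col a.2.2 + π'.col ((ct a.1 a.2.1 a.2.2).perm a.2.2) = a.2.1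
    rw [ct_perm_eq, Equiv.swap_apply_right, ct_col_eq, if_pos rfl, he, (hT a.2.2 le_rfl).2,
      add_zero]
  have hcolb : a.1 ≠ a.2.2 → π.col a.1 = -a.2.1 := by
    intro he
    rw [hπ]
    show (ct a.1 a.2.1 a.2.2).col a.1 + π'.col ((ct a.1 a.2.1 a.2.2).perm a.1) = -a.2.1
    rw [ct_perm_eq, Equiv.swap_apply_left, ct_col_eq, if_neg he, if_pos rfl,
      (hT a.2.2 le_rfl).2, add_zero]
  have hnt : ¬ Triv π a.2.2 := by
    rcases hcond a (List.mem_append_right _ (List.mem_singleton_self _)) with hl | ⟨he, ht⟩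
    · rintro ⟨h1, -⟩
      exact (ne_of_lt hl) (π.perm.injective (hpermi.trans h1.symm))
    · rintro ⟨-, h2⟩
      exact ht (by rw [← hcola he, h2])
  refine ⟨⟨fun x hx => hcond x (List.mem_append_left _ hx), hs1, rfl⟩, hπ, hpermi, hnt,
    ?_, ?_, hT⟩
  · intro k hk
    have hk1 : a.1 ≠ k := ne_of_lt (lt_of_le_of_lt ha1 hk)
    constructor
    · rw [hπ]
      show π'.perm ((ct a.1 a.2.1 a.2.2).perm k) = k
      rw [ct_perm_eq, Equiv.swap_apply_of_ne_of_ne (Ne.symm hk1) (Ne.symm (ne_of_lt hk))]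
      exact (hT k (le_of_lt hk)).1
    · rw [hπ]
      show (ct a.1 a.2.1 a.2.2).col k + π'.col ((ct a.1 a.2.1 a.2.2).perm k) = 0
      rw [ct_perm_eq, Equiv.swap_apply_of_ne_of_ne (Ne.symm hk1) (Ne.symm (ne_of_lt hk)),
        ct_col_eq, if_neg (Ne.symm (ne_of_lt hk)), if_neg (Ne.symm hk1),
        (hT k (le_of_lt hk)).2, add_zero]
  · by_cases he : a.1 = a.2.2
    · rw [if_pos he, hcola he]
    · rw [if_neg he, hcolb he, neg_neg]

lemma exists_fact : ∀ m : ℕ, ∀ π : CPerm r n,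
    (∀ k : Fin n, m ≤ k.val → Triv π k) →
    ∃ l, IsSorFact π l ∧ ∀ x ∈ l, x.2.2.val < m := by
  intro m
  induction m with
  | zero =>
    intro π hb
    have h1 : π = 1 := by
      refine ext' (Equiv.ext fun k => (hb k (Nat.zero_le _)).1) (funext fun k => (hb k (Nat.zero_le _)).2)
    exact ⟨[], ⟨by simp, by simp, by simp [h1]⟩, by simp⟩
  | succ m ih =>
    intro π hb
    by_cases hm : m < n
    · set jf : Fin n := ⟨m, hm⟩ with hjf
      by_cases htriv : Triv π jf
      · have hb' : ∀ k : Fin n, m ≤ k.val → Triv π k := by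
          intro k hk
          rcases eq_or_lt_of_le hk with he | hlt
          · have : k = jf := Fin.ext he.symm
            rw [this]; exact htriv
          · exact hb k hlt
        obtain ⟨l, h1, h2⟩ := ih π hb'
        exact ⟨l, h1, fun x hx => Nat.lt_succ_of_lt (h2 x hx)⟩
      · set i : Fin n := π.perm⁻¹ jf with hi
        have hpi : π.perm i = jf := π.perm.apply_symm_apply jf
        have hival : i.val ≤ m := by
          by_contra hc
          have := (hb i (Nat.succ_le_of_lt (not_le.1 hc))).1
          rw [hpi] at this
          rw [← this] at hc
          exact hc (le_refl m)
        set t : ZMod r := if i = jf then π.col jf else -π.col i with ht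
        set c : CPerm r n := ct i t jf with hc
        set π' : CPerm r n := π * c⁻¹ with hπ'
        have hcperm : c.perm = Equiv.swap i jf := rfl
        have hTπ' : ∀ k : Fin n, m ≤ k.val → Triv π' k := by
          intro k hk
          by_cases hkj : k = jf
          · rw [hkj]
            constructor
            · show π.perm (c.perm⁻¹ jf) = jf
              rw [hcperm, Equiv.swap_inv, Equiv.swap_apply_right]
              exact hpi
            · show c⁻¹.col jf + π.col (c⁻¹.perm jf) = 0
              rw [inv_col, inv_perm, hcperm, Equiv.swap_inv, Equiv.swap_apply_right,
                hc, ct_col_eq]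
              by_cases he : i = jf
              · rw [if_pos he, ht, if_pos he, he, neg_add_cancel]
              · rw [if_neg he, if_pos rfl, ht, if_neg he, neg_neg, neg_add_cancel]
          · have hkm : m < k.val := lt_of_le_of_ne hk (fun hh => hkj (Fin.ext hh.symm))
            have hik : i ≠ k := fun hh => absurd (hh ▸ hival) (not_le.2 hkm)
            have hjk : jf ≠ k := fun hh => hkj hh.symm
            have htk := hb k hkm
            constructor
            · show π.perm (c.perm⁻¹ k) = k
              rw [hcperm, Equiv.swap_inv, Equiv.swap_apply_of_ne_of_ne (Ne.symm hik) (Ne.symm hjk)]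
              exact htk.1
            · show c⁻¹.col k + π.col (c⁻¹.perm k) = 0
              rw [inv_col, inv_perm, hcperm, Equiv.swap_inv,
                Equiv.swap_apply_of_ne_of_ne (Ne.symm hik) (Ne.symm hjk), hc, ct_col_eq,
                if_neg hjk.symm, if_neg hik.symm, neg_zero, zero_add]
              exact htk.2
        obtain ⟨l', hl', hlt'⟩ := ih π' hTπ'
        have hcnd : i < jf ∨ (i = jf ∧ t ≠ 0) := by
          by_cases he : i = jf
          · refine Or.inr ⟨he, ?_⟩
            intro h0
            apply htriv
            rw [ht, if_pos he] at h0
            exact ⟨by rw [← he, hpi, he], h0⟩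
          · refine Or.inl ?_
            rw [Fin.lt_def]
            exact lt_of_le_of_ne hival (fun hh => he (Fin.ext hh))
        refine ⟨l' ++ [(i, t, jf)], ⟨?_, ?_, ?_⟩, ?_⟩
        · intro x hx
          rcases List.mem_append.1 hx with hx | hx
          · exact hl'.1 x hx
          · rw [List.mem_singleton.1 hx]; exact hcnd
        · rw [List.map_append, List.map_singleton, List.pairwise_append]
          refine ⟨hl'.2.1, List.pairwise_singleton _ _, ?_⟩
          intro b hb' d hd
          rw [List.mem_singleton.1 hd]
          obtain ⟨x, hx, rfl⟩ := List.mem_map.1 hb'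
          exact hlt' x hx
        · rw [List.map_append, List.map_singleton, List.prod_append, List.prod_singleton]
          have : (l'.map fun x => ct x.1 x.2.1 x.2.2).prod = π' := hl'.2.2
          rw [this, hπ']
          exact inv_mul_cancel_right π c
        · intro x hx
          rcases List.mem_append.1 hx with hx | hx
          · exact Nat.lt_succ_of_lt (hlt' x hx)
          · rw [List.mem_singleton.1 hx]; exact Nat.lt_succ_self m
    · obtain ⟨l, h1, h2⟩ := ih π
        (fun k hk => absurd (lt_of_lt_of_le k.isLt (not_lt.1 hm)) (not_lt.2 hk))
      exact ⟨l, h1, fun x hx => Nat.lt_succ_of_lt (h2 x hx)⟩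

lemma uniq_fact : ∀ m : ℕ, ∀ π : CPerm r n,
    (∀ k : Fin n, m ≤ k.val → Triv π k) →
    ∀ l₁ l₂, IsSorFact π l₁ → IsSorFact π l₂ → l₁ = l₂ := by
  intro m
  induction m with
  | zero =>
    intro π hb l₁ l₂ h₁ h₂
    have key : ∀ l, IsSorFact π l → l = [] := by
      intro l hl
      rcases List.eq_nil_or_concat l with rfl | ⟨l', a, rfl⟩
      · rfl
      · rw [List.concat_eq_append] at hl
        exact absurd (hb a.2.2 (Nat.zero_le _)) (concat_main hl).2.2.2.1
    rw [key l₁ h₁, key l₂ h₂]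
  | succ m ih =>
    intro π hb l₁ l₂ h₁ h₂
    rcases List.eq_nil_or_concat l₁ with rfl | ⟨l₁', a₁, rfl⟩ <;>
      rcases List.eq_nil_or_concat l₂ with rfl | ⟨l₂', a₂, rfl⟩ <;>
      simp only [List.concat_eq_append] at h₁ h₂ ⊢
    · have hone : (1 : CPerm r n) = π := by simpa using h₁.2.2
      have := (concat_main h₂).2.2.2.1
      exact absurd (show Triv π a₂.2.2 by rw [← hone]; exact ⟨rfl, rfl⟩) this
    · have hone : (1 : CPerm r n) = π := by simpa using h₂.2.2
      have := (concat_main h₁).2.2.2.1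
      exact absurd (show Triv π a₁.2.2 by rw [← hone]; exact ⟨rfl, rfl⟩) this
    · obtain ⟨hf₁, hp₁, hpe₁, hnt₁, hab₁, htf₁, hT₁⟩ := concat_main h₁
      obtain ⟨hf₂, hp₂, hpe₂, hnt₂, hab₂, htf₂, hT₂⟩ := concat_main h₂
      have hj : a₁.2.2 = a₂.2.2 := by
        rcases lt_trichotomy a₁.2.2 a₂.2.2 with hlt | he | hlt
        · exact absurd (hab₁ _ hlt) hnt₂
        · exact he
        · exact absurd (hab₂ _ hlt) hnt₁
      have hi : a₁.1 = a₂.1 := π.perm.injective (by rw [hpe₁, hpe₂, hj])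
      have hjlt : a₁.2.2.val < m + 1 := by
        by_contra hcc
        exact hnt₁ (hb _ (not_lt.1 hcc))
      have hjm : a₁.2.2.val ≤ m := Nat.lt_succ_iff.1 hjlt
      have hteq : a₁.2.1 = a₂.2.1 := by rw [htf₁, htf₂, hi, hj]
      have haeq : a₁ = a₂ := Prod.ext hi (Prod.ext hteq hj)
      have hπeq : (l₁'.map fun x => ct x.1 x.2.1 x.2.2).prod
          = (l₂'.map fun x => ct x.1 x.2.1 x.2.2).prod := by
        have := hp₁.symm.trans hp₂
        rw [haeq] at this
        exact mul_right_cancel this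
      have hl : l₁' = l₂' := by
        refine ih _ ?_ l₁' l₂' hf₁ ?_
        · intro k hk
          exact hT₁ k (by rw [Fin.le_def]; omega)
        · rw [hπeq]; exact hf₂
      rw [hl, haeq]

end CPerm

open CPerm in
/-- Every `π ∈ G_{r,n}` has a unique factorization
`π = (i_1^{[t_1]} j_1)(i_2^{[t_2]} j_2)⋯(i_k^{[t_k]} j_k)` with
`0 < j_1 < j_2 < ⋯ < j_k`, each factor being either a colored transposition
`(i^{[t]} j)` with `i < j`, `0 ≤ t < r`, or a coloring operation `(j^{[t]} j)`
with `0 < t < r`. -/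
theorem unique_colored_factorization (r n : ℕ) (π : CPerm r n) :
    ∃! l : List (Fin n × ZMod r × Fin n), IsSorFact π l := by
  obtain ⟨l, hl, -⟩ := exists_fact n π (fun k hk => absurd k.isLt (not_lt.2 hk))
  exact ⟨l, hl, fun l' hl' => uniq_fact n π (fun k hk => absurd k.isLt (not_lt.2 hk)) l' l hl' hl⟩
end
end

section
/- For π ∈ G_{r,n} with A-code a, the right-to-left minimum letters of π equal the 'max' positions of a: Rmil(π) = Max(a), where Max(a) = { i^{[e_i]} : c_i = i } for a = (c_1^{[e_1]}, ..., c_n^{[e_n]}). Moreover, for each color t, Rmil^t(π) = Max^t(a). -/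
noncomputable section
open scoped Classical

open CPerm in
/-- `Max(a) = {i^{[e_i]} : c_i = i}` for a code `a` (with `1`-based positions). -/
def MaxSet {r n : ℕ} (a : Fin n → ℕ × ZMod r) : Set (Fin n × ZMod r) :=
  {x | (a x.1).1 = x.1.val + 1 ∧ (a x.1).2 = x.2}

open CPerm in
/-- `Max^t(a) = {i : c_i = i, e_i = t}`. -/
def MaxT {r n : ℕ} (t : ZMod r) (a : Fin n → ℕ × ZMod r) : Set (Fin n) :=
  {i | (a i).1 = i.val + 1 ∧ (a i).2 = t}

open CPerm in
lemma acode_fst_iff {r n : ℕ} (π : CPerm r n) (b : Fin n) :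
    (Acode π b).1 = b.val + 1 ↔ ∀ j, j ≤ b → π.perm⁻¹ j ≤ π.perm⁻¹ b := by
  unfold Acode Leh
  simp only [inv_perm]
  have hIic : (Set.Iic b).ncard = b.val + 1 := by
    rw [← Finset.coe_Iic, Set.ncard_coe_finset, Fin.card_Iic]
  have hsub : {j | j ≤ b ∧ π.perm⁻¹ j ≤ π.perm⁻¹ b} ⊆ Set.Iic b := fun x hx => hx.1
  constructor
  · intro h j hj
    have heq : {j | j ≤ b ∧ π.perm⁻¹ j ≤ π.perm⁻¹ b} = Set.Iic b :=
      Set.eq_of_subset_of_ncard_le hsub (by rw [hIic]; exact le_of_eq h.symm)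
        (Set.finite_Iic b)
    have : j ∈ {j | j ≤ b ∧ π.perm⁻¹ j ≤ π.perm⁻¹ b} := heq ▸ hj
    exact this.2
  · intro h
    have heq : {j | j ≤ b ∧ π.perm⁻¹ j ≤ π.perm⁻¹ b} = Set.Iic b := by
      apply Set.Subset.antisymm hsub
      intro j hj
      exact ⟨hj, h j hj⟩
    rw [heq, hIic]

open CPerm in
lemma mem_iff {r n : ℕ} (π : CPerm r n) (b : Fin n) (t : ZMod r) :
    (b, t) ∈ RmilSet π ↔ (b, t) ∈ MaxSet (Acode π) := by
  constructor
  · rintro ⟨i, hw, hmin⟩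
    have hb : π.perm i = b := congrArg Prod.fst hw
    have ht : π.col i = t := congrArg Prod.snd hw
    have hi : π.perm⁻¹ b = i := by rw [← hb]; exact π.perm.symm_apply_apply i
    constructor
    · rw [acode_fst_iff]
      intro j hj
      rw [hi]
      by_contra hc
      push_neg at hc
      have := hmin _ hc
      rw [Equiv.Perm.coe_inv, π.perm.apply_symm_apply, hb] at this
      exact absurd (lt_of_lt_of_le this hj) (lt_irrefl b)
    · show - π⁻¹.col b = t
      simp only [inv_col, inv_perm, neg_neg, hi, ht]
  · rintro ⟨h1, h2⟩
    refine ⟨π.perm⁻¹ b, ?_, ?_⟩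
    · have ht : π.col (π.perm⁻¹ b) = t := by
        have : - π⁻¹.col b = t := h2
        simpa using this
      simp [window, π.perm.apply_symm_apply]; simpa using ht
    · intro j hj
      rw [Equiv.Perm.coe_inv, π.perm.apply_symm_apply]
      rw [acode_fst_iff] at h1
      by_contra hc
      push_neg at hc
      have := h1 _ hc
      rw [Equiv.Perm.coe_inv, π.perm.symm_apply_apply] at this
      exact absurd (lt_of_lt_of_le hj this) (lt_irrefl _)

open CPerm in
/-- For `π ∈ G_{r,n}` with `a = A-code(π)`: `Rmil(π) = Max(a)`, and for each
color `t`, `Rmil^t(π) = Max^t(a)`. -/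
theorem Rmil_eq_Max_of_Acode (r n : ℕ) (π : CPerm r n) :
    RmilSet π = MaxSet (Acode π) ∧
    ∀ t : ZMod r, RmilT t π = MaxT t (Acode π) := by
  have key : ∀ (b : Fin n) (t : ZMod r), (b, t) ∈ RmilSet π ↔ (b, t) ∈ MaxSet (Acode π) :=
    fun b t => mem_iff π b t
  constructor
  · ext ⟨b, t⟩; exact key b t
  · intro t
    ext b
    have h := key b t
    simp only [RmilSet, MaxSet, RmilT, MaxT, window, Set.mem_setOf_eq, Prod.ext_iff] at h ⊢
    constructor
    · rintro ⟨i, h1, h2, h3⟩; exact h.mp ⟨i, ⟨h1, h2⟩, h3⟩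
    · intro hm; obtain ⟨i, ⟨h1, h2⟩, h3⟩ := h.mpr hm; exact ⟨i, h1, h2, h3⟩
end
end
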